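/- arXiv:2303.07921 — 4 statements merged into one kernel-verified Lean document; each statement's English description precedes it below -/
import Mathlib

section
/- Let C : [0,T) × 𝕋 → ℝ² be a smooth family of simple closed strictly convex curves parametrized by the tangent angle, i.e. ∂_θ C(t,θ) = (cos θ, sin θ)/ρ(t,θ) for a smooth positive function ρ (so that ρ(t,θ) is the curvature at the point with tangent angle θ), and suppose the normal velocity satisfies ⟨∂_t C(t,θ), ν(θ)⟩ = −ρ(t,θ) + 2h_t with ν(θ) = (sin θ, −cos θ) and h_t = σ_t/λ_t (renormalized curvature flow). Then the curvature satisfies the PDE ∂_t ρ = ρ² ∂²_θ ρ + ρ²(ρ − 2h_t). -/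
open Real Set Filter MeasureTheory Topology

noncomputable section

/-- The perimeter `σ = ∫₀^{2π} dθ/ρ(θ)` of a strictly convex curve with curvature `ρ`
in tangent-angle coordinates. -/
def perim (ρ : ℝ → ℝ) : ℝ := ∫ θ in (0:ℝ)..(2 * π), 1 / ρ θ

/-- The enclosed area `λ = ½ ∫₀^{2π} ⟨C(θ), ν(θ)⟩/ρ(θ) dθ` of the curve `C`, where
`ν(θ) = (sin θ, −cos θ)` and `ρ` is the curvature in tangent-angle coordinates. -/
def encAreaOf (C : ℝ → ℝ × ℝ) (ρ : ℝ → ℝ) : ℝ :=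
  (1 / 2) * ∫ θ in (0:ℝ)..(2 * π),
    ((C θ).1 * Real.sin θ - (C θ).2 * Real.cos θ) / ρ θ

/-- If a smooth family of simple closed strictly convex curves is
parametrized by the tangent angle, `∂_θ C(t,θ) = (cos θ, sin θ)/ρ(t,θ)` with `ρ > 0`,
and its normal velocity is `⟨∂_t C, ν⟩ = −ρ + 2 h_t`, `h_t = σ_t/λ_t` (renormalized
curvature flow), then the curvature satisfies `∂_t ρ = ρ² ∂²_θ ρ + ρ²(ρ − 2 h_t)`. -/
theorem stmt1 (T : ℝ) (C : ℝ → ℝ → ℝ × ℝ) (ρ : ℝ → ℝ → ℝ) (V : ℝ → ℝ → ℝ × ℝ)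
    (hC : ContDiffOn ℝ (⊤ : ℕ∞) (Function.uncurry C) (Ico 0 T ×ˢ (univ : Set ℝ)))
    (hρ : ContDiffOn ℝ (⊤ : ℕ∞) (Function.uncurry ρ) (Ico 0 T ×ˢ (univ : Set ℝ)))
    (hpos : ∀ t ∈ Ico (0:ℝ) T, ∀ θ : ℝ, 0 < ρ t θ)
    (hclosed : ∀ t ∈ Ico (0:ℝ) T, ∀ θ : ℝ, C t (θ + 2 * π) = C t θ)
    (hsimple : ∀ t ∈ Ico (0:ℝ) T, InjOn (C t) (Ico 0 (2 * π)))
    -- tangent-angle parametrization: `∂_θ C(t,θ) = (cos θ, sin θ)/ρ(t,θ)`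
    (htan : ∀ t ∈ Ico (0:ℝ) T, ∀ θ : ℝ,
      HasDerivAt (C t) ((ρ t θ)⁻¹ • (Real.cos θ, Real.sin θ)) θ)
    -- `V = ∂_t C`
    (hV : ∀ t ∈ Ico (0:ℝ) T, ∀ θ : ℝ,
      HasDerivWithinAt (fun s => C s θ) (V t θ) (Ico 0 T) t)
    -- normal velocity: `⟨∂_t C, ν⟩ = −ρ + 2 h_t` with `ν(θ) = (sin θ, −cos θ)`
    (hnormal : ∀ t ∈ Ico (0:ℝ) T, ∀ θ : ℝ,
      (V t θ).1 * Real.sin θ - (V t θ).2 * Real.cos θ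
        = -(ρ t θ) + 2 * (perim (ρ t) / encAreaOf (C t) (ρ t))) :
    ∀ t ∈ Ico (0:ℝ) T, ∀ θ : ℝ,
      HasDerivWithinAt (fun s => ρ s θ)
        ((ρ t θ) ^ 2 * iteratedDeriv 2 (ρ t) θ +
          (ρ t θ) ^ 2 * (ρ t θ - 2 * (perim (ρ t) / encAreaOf (C t) (ρ t))))
        (Ico 0 T) t := by
  intro t ht θ
  have hT : 0 < T := lt_of_le_of_lt ht.1 ht.2
  set S : Set (ℝ × ℝ) := Ico (0:ℝ) T ×ˢ (univ : Set ℝ) with hSdef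
  have hUD : UniqueDiffOn ℝ S := (uniqueDiffOn_Ico 0 T).prod uniqueDiffOn_univ
  have hmemS : ∀ u ∈ Ico (0:ℝ) T, ∀ x : ℝ, ((u, x) : ℝ × ℝ) ∈ S :=
    fun u hu x => ⟨hu, mem_univ x⟩
  set F := Function.uncurry C with hFdef
  set P := Function.uncurry ρ with hPdef
  set W : ℝ × ℝ → ℝ × ℝ := fun p => fderivWithin ℝ F S p (1, 0) with hWdef
  set R : ℝ × ℝ → ℝ := fun p => fderivWithin ℝ P S p (1, 0) with hRdef
  set D1 : ℝ × ℝ → ℝ := fun p => fderivWithin ℝ P S p (0, 1) with hD1def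
  set D2 : ℝ × ℝ → ℝ := fun p => fderivWithin ℝ D1 S p (0, 1) with hD2def
  -- inclusions of slices
  have hjt : ∀ (u x : ℝ), HasDerivWithinAt (fun s => ((s, x) : ℝ × ℝ)) (1, 0) (Ico 0 T) u :=
    fun u x => ((hasDerivAt_id u).prodMk (hasDerivAt_const u x)).hasDerivWithinAt
  have hmapt : ∀ x : ℝ, MapsTo (fun s => ((s, x) : ℝ × ℝ)) (Ico 0 T) S :=
    fun x s hs => ⟨hs, mem_univ x⟩
  have hFdiff : ∀ p ∈ S, HasFDerivWithinAt F (fderivWithin ℝ F S p) S p :=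
    fun p hp => ((hC.differentiableOn (by simp)) p hp).hasFDerivWithinAt
  have hPdiff : ∀ p ∈ S, HasFDerivWithinAt P (fderivWithin ℝ P S p) S p :=
    fun p hp => ((hρ.differentiableOn (by simp)) p hp).hasFDerivWithinAt
  -- time-slices
  have hRslice : ∀ u ∈ Ico (0:ℝ) T, ∀ x : ℝ,
      HasDerivWithinAt (fun s => ρ s x) (R (u, x)) (Ico 0 T) u := by
    intro u hu x
    exact (hPdiff (u, x) (hmemS u hu x)).comp_hasDerivWithinAt u (hjt u x) (hmapt x)
  have hWslice : ∀ u ∈ Ico (0:ℝ) T, ∀ x : ℝ,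
      HasDerivWithinAt (fun s => C s x) (W (u, x)) (Ico 0 T) u := by
    intro u hu x
    exact (hFdiff (u, x) (hmemS u hu x)).comp_hasDerivWithinAt u (hjt u x) (hmapt x)
  have hVW : ∀ u ∈ Ico (0:ℝ) T, ∀ x : ℝ, V u x = W (u, x) := by
    intro u hu x
    have h1 := (hV u hu x).derivWithin ((uniqueDiffOn_Ico 0 T) u hu)
    have h2 := (hWslice u hu x).derivWithin ((uniqueDiffOn_Ico 0 T) u hu)
    rw [← h1, ← h2]
  -- θ-slices
  have hD1slice : ∀ u ∈ Ico (0:ℝ) T, ∀ x : ℝ, HasDerivAt (ρ u) (D1 (u, x)) x := by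
    intro u hu x
    have h := (hPdiff (u, x) (hmemS u hu x)).comp_hasDerivWithinAt x
      (((hasDerivAt_const x u).prodMk (hasDerivAt_id x)).hasDerivWithinAt (s := univ))
      (fun y _ => hmemS u hu y)
    exact h.hasDerivAt univ_mem
  have hPfd : ContDiffOn ℝ (⊤ : ℕ∞) (fderivWithin ℝ P S) S := hρ.fderivWithin hUD (by simp)
  have hD1smooth : ContDiffOn ℝ (⊤ : ℕ∞) D1 S := hPfd.clm_apply contDiffOn_const
  have hD1diff : ∀ p ∈ S, HasFDerivWithinAt D1 (fderivWithin ℝ D1 S p) S p :=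
    fun p hp => ((hD1smooth.differentiableOn (by simp)) p hp).hasFDerivWithinAt
  have hD2slice : ∀ u ∈ Ico (0:ℝ) T, ∀ x : ℝ,
      HasDerivAt (fun y => D1 (u, y)) (D2 (u, x)) x := by
    intro u hu x
    have h := (hD1diff (u, x) (hmemS u hu x)).comp_hasDerivWithinAt x
      (((hasDerivAt_const x u).prodMk (hasDerivAt_id x)).hasDerivWithinAt (s := univ))
      (fun y _ => hmemS u hu y)
    exact h.hasDerivAt univ_mem
  have hiter : ∀ u ∈ Ico (0:ℝ) T, ∀ x : ℝ, iteratedDeriv 2 (ρ u) x = D2 (u, x) := by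
    intro u hu x
    have hd1 : deriv (ρ u) = fun y => D1 (u, y) := funext fun y => (hD1slice u hu y).deriv
    have h2 : iteratedDeriv 2 (ρ u) = deriv (deriv (ρ u)) := by
      rw [show (2 : ℕ) = 1 + 1 from rfl, iteratedDeriv_succ, iteratedDeriv_one]
    rw [h2, hd1]
    exact (hD2slice u hu x).deriv
  have hFfd : ContDiffOn ℝ (⊤ : ℕ∞) (fderivWithin ℝ F S) S := hC.fderivWithin hUD (by simp)
  have hWsmooth : ContDiffOn ℝ (⊤ : ℕ∞) W S := hFfd.clm_apply contDiffOn_const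
  have hD2smooth : ContDiffOn ℝ (⊤ : ℕ∞) D2 S :=
    (hD1smooth.fderivWithin hUD (by simp)).clm_apply contDiffOn_const
  have hnormW : ∀ u ∈ Ico (0:ℝ) T, ∀ x : ℝ,
      (W (u, x)).1 * Real.sin x - (W (u, x)).2 * Real.cos x
        = -(ρ u x) + 2 * (perim (ρ u) / encAreaOf (C u) (ρ u)) := by
    intro u hu x
    rw [← hVW u hu x]; exact hnormal u hu x
  -- the key interior computation
  have key : ∀ u ∈ Ioo (0:ℝ) T, ∀ x : ℝ,
      R (u, x) = ρ u x ^ 2 * D2 (u, x)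
        + ρ u x ^ 2 * (ρ u x - 2 * (perim (ρ u) / encAreaOf (C u) (ρ u))) := by
    intro u hu
    have huI : u ∈ Ico (0:ℝ) T := Ioo_subset_Ico_self hu
    have hnhds : ∀ v ∈ Ioo (0:ℝ) T, ∀ x : ℝ, S ∈ 𝓝 ((v, x) : ℝ × ℝ) := by
      intro v hv x
      apply mem_of_superset ((isOpen_Ioo.prod isOpen_univ).mem_nhds ⟨hv, mem_univ x⟩)
      exact prod_mono Ioo_subset_Ico_self (subset_refl _)
    -- Schwarz step: θ-derivative of V u ·
    have hVderiv : ∀ x : ℝ, HasDerivAt (fun y => V u y)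
        ((-R (u, x) / ρ u x ^ 2) • ((Real.cos x, Real.sin x) : ℝ × ℝ)) x := by
      intro x
      have hFat : ContDiffAt ℝ (⊤ : ℕ∞) F (u, x) := hC.contDiffAt (hnhds u hu x)
      have hAat : ContDiffAt ℝ (⊤ : ℕ∞) (fderiv ℝ F) (u, x) := hFat.fderiv_right (by simp)
      have hB : HasFDerivAt (fderiv ℝ F) (fderiv ℝ (fderiv ℝ F) (u, x)) (u, x) :=
        (hAat.differentiableAt (by simp)).hasFDerivAt
      have hUopen : IsOpen (Ioo (0:ℝ) T ×ˢ (univ : Set ℝ)) := isOpen_Ioo.prod isOpen_univ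
      have hev : ∀ᶠ y in 𝓝 ((u, x) : ℝ × ℝ), HasFDerivAt F (fderiv ℝ F y) y := by
        filter_upwards [hUopen.mem_nhds ⟨hu, mem_univ x⟩] with y hy
        have hy' : S ∈ 𝓝 y :=
          mem_of_superset (hUopen.mem_nhds hy) (prod_mono Ioo_subset_Ico_self (subset_refl _))
        exact ((hC.contDiffAt hy').differentiableAt (by simp)).hasFDerivAt
      have hsym := second_derivative_symmetric_of_eventually hev hB
      -- t-slice of the second derivative
      have hts : HasDerivAt (fun s => fderiv ℝ F (s, x))
          (fderiv ℝ (fderiv ℝ F) (u, x) (1, 0)) u :=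
        hB.comp_hasDerivAt u ((hasDerivAt_id u).prodMk (hasDerivAt_const u x))
      have hts1 : HasDerivAt (fun s => fderiv ℝ F (s, x) (0, 1))
          (fderiv ℝ (fderiv ℝ F) (u, x) (1, 0) (0, 1)) u := by
        simpa using hts.clm_apply (hasDerivAt_const u ((0:ℝ), (1:ℝ)))
      have heq : ∀ᶠ s in 𝓝 u,
          (fun s => (ρ s x)⁻¹ • ((Real.cos x, Real.sin x) : ℝ × ℝ)) s
            = (fun s => fderiv ℝ F (s, x) (0, 1)) s := by
        filter_upwards [Ioo_mem_nhds hu.1 hu.2] with s hs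
        have hFd : HasFDerivAt F (fderiv ℝ F (s, x)) (s, x) :=
          ((hC.contDiffAt (hnhds s hs x)).differentiableAt (by simp)).hasFDerivAt
        have h1 : HasDerivAt (fun y => F (s, y)) (fderiv ℝ F (s, x) (0, 1)) x :=
          hFd.comp_hasDerivAt x ((hasDerivAt_const x s).prodMk (hasDerivAt_id x))
        have h2 : HasDerivAt (fun y => F (s, y))
            ((ρ s x)⁻¹ • ((Real.cos x, Real.sin x) : ℝ × ℝ)) x :=
          htan s (Ioo_subset_Ico_self hs) x
        exact h2.unique h1
      have hinv : HasDerivAt (fun s => (ρ s x)⁻¹ • ((Real.cos x, Real.sin x) : ℝ × ℝ))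
          ((-R (u, x) / ρ u x ^ 2) • ((Real.cos x, Real.sin x) : ℝ × ℝ)) u := by
        have h0 : HasDerivAt (fun s => ρ s x) (R (u, x)) u :=
          (hRslice u huI x).hasDerivAt (Ico_mem_nhds hu.1 hu.2)
        exact (h0.inv (ne_of_gt (hpos u huI x))).smul_const _
      have hinv' : HasDerivAt (fun s => fderiv ℝ F (s, x) (0, 1))
          ((-R (u, x) / ρ u x ^ 2) • ((Real.cos x, Real.sin x) : ℝ × ℝ)) u :=
        hinv.congr_of_eventuallyEq (by filter_upwards [heq] with s hs using hs.symm)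
      have huniq : ((-R (u, x) / ρ u x ^ 2) • ((Real.cos x, Real.sin x) : ℝ × ℝ))
          = fderiv ℝ (fderiv ℝ F) (u, x) (1, 0) (0, 1) := hinv'.unique hts1
      -- θ-slice of the second derivative
      have hθs : HasDerivAt (fun y => fderiv ℝ F (u, y))
          (fderiv ℝ (fderiv ℝ F) (u, x) (0, 1)) x :=
        hB.comp_hasDerivAt x ((hasDerivAt_const x u).prodMk (hasDerivAt_id x))
      have hθs1 : HasDerivAt (fun y => fderiv ℝ F (u, y) (1, 0))
          (fderiv ℝ (fderiv ℝ F) (u, x) (0, 1) (1, 0)) x := by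
        simpa using hθs.clm_apply (hasDerivAt_const x ((1:ℝ), (0:ℝ)))
      have hfun : (fun y => V u y) = fun y => fderiv ℝ F (u, y) (1, 0) := by
        funext y
        rw [hVW u huI y]
        show fderivWithin ℝ F S (u, y) (1, 0) = _
        rw [fderivWithin_of_mem_nhds (hnhds u hu y)]
      have hres : HasDerivAt (fun y => V u y)
          (fderiv ℝ (fderiv ℝ F) (u, x) (0, 1) (1, 0)) x := by
        rw [hfun]; exact hθs1
      rwa [← hsym (1, 0) (0, 1), ← huniq] at hres
    intro x
    -- components of V's θ-derivative
    have hV1 : ∀ y : ℝ, HasDerivAt (fun z => (V u z).1)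
        ((-R (u, y) / ρ u y ^ 2) * Real.cos y) y := by
      intro y
      have h := (ContinuousLinearMap.fst ℝ ℝ ℝ).hasFDerivAt.comp_hasDerivAt y (hVderiv y)
      simpa [smul_eq_mul, Function.comp_def] using h
    have hV2 : ∀ y : ℝ, HasDerivAt (fun z => (V u z).2)
        ((-R (u, y) / ρ u y ^ 2) * Real.sin y) y := by
      intro y
      have h := (ContinuousLinearMap.snd ℝ ℝ ℝ).hasFDerivAt.comp_hasDerivAt y (hVderiv y)
      simpa [smul_eq_mul, Function.comp_def] using h
    -- the tangential component f = ⟨V, T⟩ equals -∂_θ ρ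
    have hg : ∀ y : ℝ, HasDerivAt (fun z => (V u z).1 * Real.sin z - (V u z).2 * Real.cos z)
        ((V u y).1 * Real.cos y + (V u y).2 * Real.sin y) y := by
      intro y
      have h := ((hV1 y).mul (Real.hasDerivAt_sin y)).sub ((hV2 y).mul (Real.hasDerivAt_cos y))
      refine h.congr_deriv ?_
      ring
    have hfd1 : ∀ y : ℝ, (V u y).1 * Real.cos y + (V u y).2 * Real.sin y = -D1 (u, y) := by
      intro y
      have h1 : HasDerivAt (fun z => -(ρ u z) + 2 * (perim (ρ u) / encAreaOf (C u) (ρ u)))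
          (-D1 (u, y)) y := ((hD1slice u huI y).neg).add_const _
      have h3 : (fun z => (V u z).1 * Real.sin z - (V u z).2 * Real.cos z)
          = fun z => -(ρ u z) + 2 * (perim (ρ u) / encAreaOf (C u) (ρ u)) :=
        funext fun z => hnormal u huI z
      have h2 := hg y
      rw [h3] at h2
      exact h2.unique h1
    have hf : HasDerivAt (fun z => (V u z).1 * Real.cos z + (V u z).2 * Real.sin z)
        ((-R (u, x) / ρ u x ^ 2)
          - ((V u x).1 * Real.sin x - (V u x).2 * Real.cos x)) x := by
      have h := ((hV1 x).mul (Real.hasDerivAt_cos x)).add ((hV2 x).mul (Real.hasDerivAt_sin x))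
      refine h.congr_deriv ?_
      have hsc := Real.sin_sq_add_cos_sq x
      linear_combination -(R (u, x) / ρ u x ^ 2) * hsc
    have hfinal : (-R (u, x) / ρ u x ^ 2)
        - ((V u x).1 * Real.sin x - (V u x).2 * Real.cos x) = -D2 (u, x) := by
      have h4 : HasDerivAt (fun z => -D1 (u, z)) (-D2 (u, x)) x := (hD2slice u huI x).neg
      have h5 := hf
      rw [show (fun z => (V u z).1 * Real.cos z + (V u z).2 * Real.sin z)
          = fun z => -D1 (u, z) from funext hfd1] at h5
      exact h5.unique h4
    rw [hnormal u huI x] at hfinal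
    have hρ2 : ρ u x ^ 2 ≠ 0 := pow_ne_zero 2 (ne_of_gt (hpos u huI x))
    have h6 : -R (u, x) / ρ u x ^ 2
        = -D2 (u, x) + (-(ρ u x) + 2 * (perim (ρ u) / encAreaOf (C u) (ρ u))) := by
      linarith [hfinal]
    have h7 := (div_eq_iff hρ2).1 h6
    linear_combination -h7
  -- assemble
  rw [show iteratedDeriv 2 (ρ t) θ = D2 (t, θ) from hiter t ht θ]
  rcases eq_or_lt_of_le ht.1 with h0 | h0
  · -- boundary case t = 0
    have h0' : t = 0 := h0.symm
    subst h0'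
    set hh : ℝ → ℝ := fun s => perim (ρ s) / encAreaOf (C s) (ρ s) with hhdef
    set N : ℝ → ℝ := fun s => ρ s θ ^ 2 * D2 (s, θ)
      - ρ s θ ^ 2 * ((W (s, θ)).1 * Real.sin θ - (W (s, θ)).2 * Real.cos θ) with hNdef
    have h0mem : (0:ℝ) ∈ Ico (0:ℝ) T := ⟨le_refl 0, hT⟩
    have hNL : N 0 = ρ 0 θ ^ 2 * D2 (0, θ) + ρ 0 θ ^ 2 * (ρ 0 θ - 2 * hh 0) := by
      have h2h := hnormW 0 h0mem θ
      show ρ 0 θ ^ 2 * D2 (0, θ)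
          - ρ 0 θ ^ 2 * ((W (0, θ)).1 * Real.sin θ - (W (0, θ)).2 * Real.cos θ) = _
      rw [h2h]
      ring
    -- continuity of N within Ico at 0
    have hcm : ContinuousWithinAt (fun s => ((s, θ) : ℝ × ℝ)) (Ico 0 T) 0 :=
      (continuous_id.prodMk continuous_const).continuousWithinAt
    have hρc : ContinuousWithinAt (fun s => ρ s θ) (Ico 0 T) 0 :=
      ContinuousWithinAt.comp (f := fun s => ((s, θ) : ℝ × ℝ))
        (hρ.continuousOn (0, θ) (hmemS 0 h0mem θ)) hcm (hmapt θ)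
    have hD2c : ContinuousWithinAt (fun s => D2 (s, θ)) (Ico 0 T) 0 :=
      ContinuousWithinAt.comp (f := fun s => ((s, θ) : ℝ × ℝ))
        (hD2smooth.continuousOn (0, θ) (hmemS 0 h0mem θ)) hcm (hmapt θ)
    have hWc : ContinuousWithinAt (fun s => W (s, θ)) (Ico 0 T) 0 :=
      ContinuousWithinAt.comp (f := fun s => ((s, θ) : ℝ × ℝ))
        (hWsmooth.continuousOn (0, θ) (hmemS 0 h0mem θ)) hcm (hmapt θ)
    have hNcont : ContinuousWithinAt N (Ico 0 T) 0 := by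
      apply ContinuousWithinAt.sub
      · exact (hρc.pow 2).mul hD2c
      · exact (hρc.pow 2).mul
          ((hWc.fst.mul continuousWithinAt_const).sub (hWc.snd.mul continuousWithinAt_const))
    have hIooIoi : Ioo (0:ℝ) T ∈ 𝓝[>] (0:ℝ) := Ioo_mem_nhdsGT hT
    have hle : 𝓝[>] (0:ℝ) ≤ 𝓝[Ico (0:ℝ) T] (0:ℝ) :=
      le_trans (nhdsWithin_le_of_mem hIooIoi) (nhdsWithin_mono _ Ioo_subset_Ico_self)
    have hNderiv : ∀ s ∈ Ioo (0:ℝ) T, deriv (fun s' => ρ s' θ) s = N s := by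
      intro s hs
      have hsI : s ∈ Ico (0:ℝ) T := Ioo_subset_Ico_self hs
      have hd := (hRslice s hsI θ).hasDerivAt (Ico_mem_nhds hs.1 hs.2)
      rw [hd.deriv, key s hs θ]
      have h2h := hnormW s hsI θ
      show _ = ρ s θ ^ 2 * D2 (s, θ)
        - ρ s θ ^ 2 * ((W (s, θ)).1 * Real.sin θ - (W (s, θ)).2 * Real.cos θ)
      rw [h2h]
      ring
    have htend : Tendsto (fun s => deriv (fun s' => ρ s' θ) s) (𝓝[>] (0:ℝ)) (𝓝 (N 0)) := by
      have h1 : Tendsto N (𝓝[>] (0:ℝ)) (𝓝 (N 0)) := hNcont.tendsto.mono_left hle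
      refine Tendsto.congr' ?_ h1
      filter_upwards [hIooIoi] with s hs using (hNderiv s hs).symm
    have hmain : HasDerivWithinAt (fun s => ρ s θ) (N 0) (Ici (0:ℝ)) 0 := by
      apply hasDerivWithinAt_Ici_of_tendsto_deriv (s := Ioo (0:ℝ) T)
      · intro s hs
        exact (((hRslice s (Ioo_subset_Ico_self hs) θ).hasDerivAt
          (Ico_mem_nhds hs.1 hs.2)).differentiableAt).differentiableWithinAt
      · exact hρc.mono Ioo_subset_Ico_self
      · exact hIooIoi
      · exact htend
    rw [show ρ 0 θ ^ 2 * D2 (0, θ) + ρ 0 θ ^ 2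
        * (ρ 0 θ - 2 * (perim (ρ 0) / encAreaOf (C 0) (ρ 0))) = N 0 from hNL.symm]
    exact hmain.mono Ico_subset_Ici_self
  · -- interior case
    have htI : t ∈ Ioo (0:ℝ) T := ⟨h0, ht.2⟩
    rw [← key t htI θ]
    exact ((hRslice t ht θ).hasDerivAt (Ico_mem_nhds h0 ht.2)).hasDerivWithinAt

end
end

section
/- Let n ≥ 2 and let ρ : ℝ → (0,∞) be a C¹, 2π-periodic function satisfying the closure conditions and the G_n-symmetries ρ(−θ) = ρ(θ) and ρ(θ + 2π/n) = ρ(θ) (so ρ'(0) = 0). Fix b ∈ ℝ and define, for θ ∈ (0, π/n], Π(θ) = −b + ∫₀^θ sin β/ρ(β) dβ + (cos θ/ sin θ) ∫₀^θ cos β/ρ(β) dβ (the ordinate of the intersection of the normal line at C(θ) with the vertical axis). Then for θ ∈ (0, π/n), Π'(θ) = −(1/sin² θ) ∫₀^θ ρ'(β) sin β / ρ(β)² dβ; in particular, if ρ is non-increasing on [0, π/n], then Π is non-decreasing on (0, π/n]. Moreover Π'(θ) → 0 as θ → 0⁺, so Π extends to a C¹ function on [0, π/n] with Π(0) = −b +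 1/ρ(0). -/
open Real Set Filter MeasureTheory Topology

/-!
Differentiating `Π` and integrating by parts with `(sin / ρ)' = cos / ρ - ρ' sin / ρ²` gives
`Π'(θ) = -(1 / sin² θ) ∫₀^θ ρ' sin / ρ²`, which is nonnegative on `(0, π/n]` when `ρ` is
non-increasing there, since `sin ≥ 0`. At `θ = 0` both `Π` and this formula are `0/0` forms:
L'Hôpital's rule gives `Π → -b + 1/ρ(0)` and `Π' → -ρ'(0) / (2ρ(0)²)`, which vanishes because
`ρ` is even. A function whose derivative has a limit at an endpoint of an interval extends to a
`C¹` function up to that endpoint.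
-/

noncomputable section

def normalOrdinate (ρ : ℝ → ℝ) (b θ : ℝ) : ℝ :=
  -b + (∫ β in (0:ℝ)..θ, sin β / ρ β) + cos θ / sin θ * ∫ β in (0:ℝ)..θ, cos β / ρ β

def normalOrdinateDeriv (ρ : ℝ → ℝ) (θ : ℝ) : ℝ :=
  -(1 / sin θ ^ 2) * ∫ β in (0:ℝ)..θ, deriv ρ β * sin β / ρ β ^ 2

lemma Function.Even.deriv_zero {f : ℝ → ℝ} (hf : Function.Even f) : deriv f 0 = 0 := by
  have h := deriv_comp_neg (f := f) (x := 0)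
  simp only [show (fun x => f (-x)) = f from funext hf, neg_zero] at h
  linarith

lemma hasDerivAt_cos_div_sin {θ : ℝ} (hθ : sin θ ≠ 0) :
    HasDerivAt (fun t => cos t / sin t) (-(1 / sin θ ^ 2)) θ := by
  refine ((hasDerivAt_cos θ).div (hasDerivAt_sin θ) hθ).congr_deriv ?_
  field_simp
  linear_combination -sin_sq_add_cos_sq θ

lemma Continuous.hasDerivAt_integral {f : ℝ → ℝ} (hf : Continuous f) (a θ : ℝ) :
    HasDerivAt (fun t => ∫ β in a..t, f β) (f θ) θ :=
  (hf.integral_hasStrictDerivAt a θ).hasDerivAt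

lemma eventually_sin_pos_cos_pos : ∀ᶠ θ in 𝓝[>] (0:ℝ), 0 < sin θ ∧ 0 < cos θ := by
  filter_upwards [Ioo_mem_nhdsGT pi_div_two_pos] with θ hθ
  exact ⟨sin_pos_of_pos_of_lt_pi hθ.1 (by linarith [hθ.2, pi_pos]),
    cos_pos_of_mem_Ioo ⟨by linarith [hθ.1, pi_pos], hθ.2⟩⟩

lemma tendsto_integral_nhdsGT_zero {f : ℝ → ℝ} (hf : Continuous f) :
    Tendsto (fun θ => ∫ β in (0:ℝ)..θ, f β) (𝓝[>] 0) (𝓝 0) := by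
  simpa using ((hf.hasDerivAt_integral 0 0).continuousAt.tendsto).mono_left nhdsWithin_le_nhds

lemma tendsto_integral_div_sin {f : ℝ → ℝ} (hf : Continuous f) :
    Tendsto (fun θ => (∫ β in (0:ℝ)..θ, f β) / sin θ) (𝓝[>] 0) (𝓝 (f 0)) := by
  refine HasDerivAt.lhopital_zero_nhdsGT (f' := f) (g' := cos)
    (Eventually.of_forall (hf.hasDerivAt_integral 0)) (Eventually.of_forall hasDerivAt_sin)
    (eventually_sin_pos_cos_pos.mono fun θ h => h.2.ne') (tendsto_integral_nhdsGT_zero hf)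
    ?_ ?_
  · simpa using (continuous_sin.tendsto 0).mono_left nhdsWithin_le_nhds
  · have hcont : ContinuousAt (fun θ => f θ / cos θ) 0 := by fun_prop (disch := simp)
    simpa using hcont.tendsto.mono_left nhdsWithin_le_nhds

lemma tendsto_integral_mul_sin_div_sin_sq {f : ℝ → ℝ} (hf : Continuous f) :
    Tendsto (fun θ => (∫ β in (0:ℝ)..θ, f β * sin β) / sin θ ^ 2) (𝓝[>] 0) (𝓝 (f 0 / 2)) := by
  have hfsin : Continuous fun β => f β * sin β := hf.mul continuous_sin
  refine HasDerivAt.lhopital_zero_nhdsGT (f' := fun θ => f θ * sin θ)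
    (g' := fun θ => 2 * sin θ * cos θ)
    (Eventually.of_forall (hfsin.hasDerivAt_integral 0))
    (Eventually.of_forall fun θ => ((hasDerivAt_sin θ).pow 2).congr_deriv (by ring))
    (eventually_sin_pos_cos_pos.mono fun θ h => by have := h.1; have := h.2; positivity)
    (tendsto_integral_nhdsGT_zero hfsin) ?_ ?_
  · have hcont : ContinuousAt (fun θ => sin θ ^ 2) 0 := by fun_prop
    simpa using hcont.tendsto.mono_left nhdsWithin_le_nhds
  have hlim : Tendsto (fun θ => f θ / (2 * cos θ)) (𝓝[>] 0) (𝓝 (f 0 / 2)) := by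
    have hcont : ContinuousAt (fun θ => f θ / (2 * cos θ)) 0 := by fun_prop (disch := simp)
    simpa using hcont.tendsto.mono_left nhdsWithin_le_nhds
  refine hlim.congr' (eventually_sin_pos_cos_pos.mono fun θ h => ?_)
  field_simp [h.1.ne']

section Curvature

variable {ρ : ℝ → ℝ}

lemma continuous_deriv_mul_sin_div_sq (hρ : ContDiff ℝ 1 ρ) (hne : ∀ x, ρ x ≠ 0) :
    Continuous fun β => deriv ρ β * sin β / ρ β ^ 2 :=
  ((hρ.continuous_deriv le_rfl).mul continuous_sin).div (hρ.continuous.pow 2)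
    fun β => pow_ne_zero 2 (hne β)

lemma integral_deriv_mul_sin_div_sq (hρ : ContDiff ℝ 1 ρ) (hne : ∀ x, ρ x ≠ 0) (θ : ℝ) :
    ∫ β in (0:ℝ)..θ, deriv ρ β * sin β / ρ β ^ 2 =
      (∫ β in (0:ℝ)..θ, cos β / ρ β) - sin θ / ρ θ := by
  have hcos : Continuous fun β => cos β / ρ β := continuous_cos.div hρ.continuous hne
  have hderiv := continuous_deriv_mul_sin_div_sq hρ hne
  have hftc := intervalIntegral.integral_eq_sub_of_hasDerivAt (a := 0) (b := θ)
    (f := fun t => sin t / ρ t) (f' := fun β => cos β / ρ β - deriv ρ β * sin β / ρ β ^ 2)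
    (fun β _ =>
      ((hasDerivAt_sin β).div ((hρ.differentiable one_ne_zero β).hasDerivAt) (hne β)).congr_deriv
        (by field_simp [hne β]))
    ((hcos.sub hderiv).intervalIntegrable 0 θ)
  rw [intervalIntegral.integral_sub (hcos.intervalIntegrable 0 θ)
    (hderiv.intervalIntegrable 0 θ)] at hftc
  simp only [sin_zero, zero_div, sub_zero] at hftc
  linarith

lemma hasDerivAt_normalOrdinate (hρ : ContDiff ℝ 1 ρ) (hne : ∀ x, ρ x ≠ 0) (b : ℝ) {θ : ℝ}
    (hθ : sin θ ≠ 0) :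
    HasDerivAt (normalOrdinate ρ b) (normalOrdinateDeriv ρ θ) θ := by
  have hsin := Continuous.hasDerivAt_integral (f := fun β => sin β / ρ β)
    (continuous_sin.div hρ.continuous hne) 0 θ
  have hcos := Continuous.hasDerivAt_integral (f := fun β => cos β / ρ β)
    (continuous_cos.div hρ.continuous hne) 0 θ
  refine (((hasDerivAt_const θ (-b)).add hsin).add
    ((hasDerivAt_cos_div_sin hθ).mul hcos)).congr_deriv ?_
  rw [normalOrdinateDeriv, integral_deriv_mul_sin_div_sq hρ hne]
  field_simp [hne θ]
  linear_combination sin θ * sin_sq_add_cos_sq θ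

lemma integral_deriv_mul_sin_div_sq_nonpos (hρ : ContDiff ℝ 1 ρ) {θ : ℝ} (h0 : 0 ≤ θ)
    (hπ : θ ≤ π) (hanti : AntitoneOn ρ (Icc 0 θ)) :
    ∫ β in (0:ℝ)..θ, deriv ρ β * sin β / ρ β ^ 2 ≤ 0 := by
  rcases h0.eq_or_lt with rfl | hθ
  · simp
  have hderiv : ∀ β ∈ Icc 0 θ, deriv ρ β ≤ 0 := fun β hβ =>
    ((hρ.differentiable one_ne_zero β).hasDerivAt.hasDerivWithinAt.derivWithin
      (uniqueDiffOn_Icc hθ β hβ)) ▸ hanti.derivWithin_nonpos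
  have hnonneg := intervalIntegral.integral_nonneg (μ := volume) h0 fun β hβ =>
    show 0 ≤ -(deriv ρ β * sin β / ρ β ^ 2) from
      neg_nonneg.2 <| div_nonpos_of_nonpos_of_nonneg
        (mul_nonpos_of_nonpos_of_nonneg (hderiv β hβ)
          (sin_nonneg_of_nonneg_of_le_pi hβ.1 (hβ.2.trans hπ))) (sq_nonneg _)
  rw [intervalIntegral.integral_neg] at hnonneg
  linarith

lemma monotoneOn_normalOrdinate (hρ : ContDiff ℝ 1 ρ) (hne : ∀ x, ρ x ≠ 0) (b : ℝ) {a : ℝ}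
    (ha : a < π) (hanti : AntitoneOn ρ (Icc 0 a)) :
    MonotoneOn (normalOrdinate ρ b) (Ioc 0 a) := by
  have hderiv : ∀ θ ∈ Ioc 0 a, HasDerivAt (normalOrdinate ρ b) (normalOrdinateDeriv ρ θ) θ :=
    fun θ hθ => hasDerivAt_normalOrdinate hρ hne b
      (sin_pos_of_pos_of_lt_pi hθ.1 (hθ.2.trans_lt ha)).ne'
  refine monotoneOn_of_deriv_nonneg (convex_Ioc 0 a)
    (fun θ hθ => (hderiv θ hθ).continuousAt.continuousWithinAt)
    (fun θ hθ => ?_) fun θ hθ => ?_ <;> rw [interior_Ioc] at hθ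
  · exact (hderiv θ (Ioo_subset_Ioc_self hθ)).differentiableAt.differentiableWithinAt
  rw [(hderiv θ (Ioo_subset_Ioc_self hθ)).deriv, normalOrdinateDeriv]
  exact mul_nonneg_of_nonpos_of_nonpos (neg_nonpos.2 (by positivity))
    (integral_deriv_mul_sin_div_sq_nonpos hρ hθ.1.le (hθ.2.le.trans ha.le)
      (hanti.mono (Icc_subset_Icc_right hθ.2.le)))

lemma continuousAt_normalOrdinateDeriv (hρ : ContDiff ℝ 1 ρ) (hne : ∀ x, ρ x ≠ 0) {θ : ℝ}
    (hθ : sin θ ≠ 0) : ContinuousAt (normalOrdinateDeriv ρ) θ :=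
  ((continuousAt_const.div (continuous_sin.continuousAt.pow 2) (pow_ne_zero 2 hθ)).neg).mul
    ((continuous_deriv_mul_sin_div_sq hρ hne).hasDerivAt_integral 0 θ).continuousAt

lemma tendsto_normalOrdinate (hρ : Continuous ρ) (hne : ∀ x, ρ x ≠ 0) (b : ℝ) :
    Tendsto (normalOrdinate ρ b) (𝓝[>] 0) (𝓝 (-b + 1 / ρ 0)) := by
  have hsin := tendsto_integral_nhdsGT_zero (continuous_sin.div hρ hne)
  have hcos := tendsto_integral_div_sin (continuous_cos.div hρ hne)
  have hcos0 : Tendsto cos (𝓝[>] 0) (𝓝 1) := by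
    simpa using (continuous_cos.tendsto 0).mono_left nhdsWithin_le_nhds
  have := ((tendsto_const_nhds (x := -b)).add hsin).add (hcos0.mul hcos)
  simp only [Pi.div_apply, cos_zero, add_zero, one_mul] at this
  refine this.congr fun θ => ?_
  simp only [normalOrdinate]
  ring

lemma tendsto_normalOrdinateDeriv (hρ : ContDiff ℝ 1 ρ) (hne : ∀ x, ρ x ≠ 0)
    (h0 : deriv ρ 0 = 0) : Tendsto (normalOrdinateDeriv ρ) (𝓝[>] 0) (𝓝 0) := by
  have hf : Continuous fun β => deriv ρ β / ρ β ^ 2 :=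
    (hρ.continuous_deriv le_rfl).div (hρ.continuous.pow 2) fun β => pow_ne_zero 2 (hne β)
  have := (tendsto_integral_mul_sin_div_sin_sq hf).neg
  simp only [h0, zero_div, neg_zero] at this
  refine this.congr fun θ => ?_
  simp only [normalOrdinateDeriv, div_mul_eq_mul_div]
  ring

end Curvature

lemma contDiffOn_Icc_update_of_tendsto {f f' : ℝ → ℝ} {a c y L : ℝ} (hac : a < c)
    (hf : ∀ x ∈ Ioc a c, HasDerivAt f (f' x) x) (hf' : ContinuousOn f' (Ioc a c))
    (hy : Tendsto f (𝓝[>] a) (𝓝 y)) (hL : Tendsto f' (𝓝[>] a) (𝓝 L)) :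
    ContDiffOn ℝ 1 (Function.update f a y) (Icc a c) := by
  have hfF : ∀ x, a < x → Function.update f a y =ᶠ[𝓝 x] f := fun x hx =>
    (eventually_ne_nhds hx.ne').mono fun z hz => Function.update_of_ne hz ..
  have hderiv : ∀ x ∈ Icc a c,
      HasDerivWithinAt (Function.update f a y) (Function.update f' a L x) (Icc a c) x := by
    intro x hx
    rcases hx.1.eq_or_lt with rfl | hax
    · rw [Function.update_self]
      refine (hasDerivWithinAt_Ici_of_tendsto_deriv (s := Ioo a c) (fun z hz => ?_) ?_
        (Ioo_mem_nhdsGT hac) ?_).mono Icc_subset_Ici_self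
      · exact ((hf z ⟨hz.1, hz.2.le⟩).differentiableAt.congr_of_eventuallyEq
          (hfF z hz.1)).differentiableWithinAt
      · rw [continuousWithinAt_update_same]
        exact hy.mono_left (nhdsWithin_mono _ (sdiff_subset.trans Ioo_subset_Ioi_self))
      · refine hL.congr' ?_
        filter_upwards [Ioo_mem_nhdsGT hac] with z hz
        exact ((hf z ⟨hz.1, hz.2.le⟩).congr_of_eventuallyEq (hfF z hz.1)).deriv.symm
    · rw [Function.update_of_ne hax.ne']
      exact ((hf x ⟨hax, hx.2⟩).congr_of_eventuallyEq (hfF x hax)).hasDerivWithinAt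
  rw [contDiffOn_one_iff_derivWithin (uniqueDiffOn_Icc hac)]
  refine ⟨fun x hx => (hderiv x hx).differentiableWithinAt, ?_⟩
  have hcont : ContinuousOn (Function.update f' a L) (Icc a c) := by
    rw [continuousOn_update_iff, Icc_sdiff_left]
    exact ⟨hf', fun _ => hL.mono_left (nhdsWithin_mono _ Ioc_subset_Ioi_self)⟩
  exact hcont.congr fun x hx => (hderiv x hx).derivWithin (uniqueDiffOn_Icc hac x hx)

theorem stmt16_general (n : ℕ) (hn : 2 ≤ n) (ρ : ℝ → ℝ)
    (hρ : ContDiff ℝ 1 ρ) (hpos : ∀ θ, 0 < ρ θ)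
    (hsym : ∀ θ : ℝ, ρ (-θ) = ρ θ)
    (b : ℝ) (Pf : ℝ → ℝ)
    (hPf : ∀ θ : ℝ, Pf θ =
      -b + (∫ β in (0:ℝ)..θ, Real.sin β / ρ β) +
        (Real.cos θ / Real.sin θ) * ∫ β in (0:ℝ)..θ, Real.cos β / ρ β) :
    (∀ θ ∈ Ioo (0:ℝ) (π / n),
      HasDerivAt Pf
        (-(1 / (Real.sin θ) ^ 2) * ∫ β in (0:ℝ)..θ, deriv ρ β * Real.sin β / (ρ β) ^ 2)
        θ) ∧
    (AntitoneOn ρ (Icc (0:ℝ) (π / n)) → MonotoneOn Pf (Ioc (0:ℝ) (π / n))) ∧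
    Tendsto (deriv Pf) (𝓝[>] (0:ℝ)) (𝓝 0) ∧
    ∃ Pbar : ℝ → ℝ, ContDiffOn ℝ 1 Pbar (Icc (0:ℝ) (π / n)) ∧
      (∀ θ ∈ Ioc (0:ℝ) (π / n), Pbar θ = Pf θ) ∧
      Pbar 0 = -b + 1 / ρ 0 := by
  obtain rfl : Pf = normalOrdinate ρ b := funext hPf
  have hne : ∀ x, ρ x ≠ 0 := fun x => (hpos x).ne'
  have hπn : 0 < π / n := by positivity
  have hπn_lt : π / n < π := div_lt_self pi_pos (by exact_mod_cast hn)
  have hsin : ∀ θ ∈ Ioc 0 (π / n), sin θ ≠ 0 := fun θ hθ =>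
    (sin_pos_of_pos_of_lt_pi hθ.1 (hθ.2.trans_lt hπn_lt)).ne'
  have hderiv : ∀ θ ∈ Ioc 0 (π / n),
      HasDerivAt (normalOrdinate ρ b) (normalOrdinateDeriv ρ θ) θ := fun θ hθ =>
    hasDerivAt_normalOrdinate hρ hne b (hsin θ hθ)
  have hlim := tendsto_normalOrdinateDeriv hρ hne (Function.Even.deriv_zero hsym)
  refine ⟨fun θ hθ => hderiv θ (Ioo_subset_Ioc_self hθ), monotoneOn_normalOrdinate hρ hne b hπn_lt,
    hlim.congr' ?_, Function.update (normalOrdinate ρ b) 0 (-b + 1 / ρ 0),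
    contDiffOn_Icc_update_of_tendsto hπn hderiv
      (fun θ hθ => (continuousAt_normalOrdinateDeriv hρ hne (hsin θ hθ)).continuousWithinAt)
      (tendsto_normalOrdinate hρ.continuous hne b) hlim,
    fun θ hθ => Function.update_of_ne hθ.1.ne' .., Function.update_self ..⟩
  filter_upwards [Ioo_mem_nhdsGT hπn] with θ hθ
  exact (hderiv θ ⟨hθ.1, hθ.2.le⟩).deriv.symm

/-- For a `C¹` positive `2π`-periodic curvature function with the
`G_n`-symmetries, the function `Π(θ)` (ordinate of the intersection of the normal line
at `C(θ)` with the vertical axis) satisfies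
`Π'(θ) = −(1/sin²θ) ∫₀^θ ρ'(β) sin β/ρ(β)² dβ` on `(0, π/n)`; in particular if `ρ` is
non-increasing on `[0, π/n]` then `Π` is non-decreasing on `(0, π/n]`; moreover
`Π'(θ) → 0` as `θ → 0⁺`, so `Π` extends to a `C¹` function on `[0, π/n]` with
`Π(0) = −b + 1/ρ(0)`. -/
theorem stmt16 (n : ℕ) (hn : 2 ≤ n) (ρ : ℝ → ℝ)
    (hρ : ContDiff ℝ 1 ρ) (hpos : ∀ θ, 0 < ρ θ)
    (hper : ∀ θ, ρ (θ + 2 * π) = ρ θ)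
    (hc : (∫ θ in (0:ℝ)..(2 * π), Real.cos θ / ρ θ) = 0)
    (hc' : (∫ θ in (0:ℝ)..(2 * π), Real.sin θ / ρ θ) = 0)
    (hsym : ∀ θ : ℝ, ρ (-θ) = ρ θ)
    (hsymn : ∀ θ : ℝ, ρ (θ + 2 * π / n) = ρ θ)
    (b : ℝ) (Pf : ℝ → ℝ)
    (hPf : ∀ θ : ℝ, Pf θ =
      -b + (∫ β in (0:ℝ)..θ, Real.sin β / ρ β) +
        (Real.cos θ / Real.sin θ) * ∫ β in (0:ℝ)..θ, Real.cos β / ρ β) :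
    (∀ θ ∈ Ioo (0:ℝ) (π / n),
      HasDerivAt Pf
        (-(1 / (Real.sin θ) ^ 2) * ∫ β in (0:ℝ)..θ, deriv ρ β * Real.sin β / (ρ β) ^ 2)
        θ) ∧
    (AntitoneOn ρ (Icc (0:ℝ) (π / n)) → MonotoneOn Pf (Ioc (0:ℝ) (π / n))) ∧
    Tendsto (deriv Pf) (𝓝[>] (0:ℝ)) (𝓝 0) ∧
    ∃ Pbar : ℝ → ℝ, ContDiffOn ℝ 1 Pbar (Icc (0:ℝ) (π / n)) ∧
      (∀ θ ∈ Ioc (0:ℝ) (π / n), Pbar θ = Pf θ) ∧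
      Pbar 0 = -b + 1 / ρ 0 :=
  stmt16_general n hn ρ hρ hpos hsym b Pf hPf

end
end

section
/- Let n ≥ 2 and let ρ : [0,T) × ℝ → (0,∞) be a smooth solution of the curvature flow PDE in tangent-angle coordinates, ∂_t ρ = ρ² ∂²_θ ρ + ρ³, 2π-periodic in θ and satisfying the closure conditions for every t, such that for every t the symmetries ρ(t,−θ) = ρ(t,θ) and ρ(t, θ + 2π/n) = ρ(t,θ) hold (G_n-invariance, which is preserved by the flow). If ∂_θ ρ(0,θ) ≤ 0 for all θ ∈ [0, π/n], then ∂_θ ρ(t,θ) ≤ 0 for all θ ∈ [0, π/n] and all t ∈ [0,T). In other words, the class S_n^↓ of G_n-symmetric strictly convex curves whose curvature is non-increasing in θ on [0, π/n] is stable under the curvature flow. -/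
open Real Set Filter MeasureTheory Topology

open scoped ContDiff

set_option maxHeartbeats 1600000

noncomputable section

private lemma stmt17_finalArith (r w0 q2 q3 e0 C ε : ℝ) (hw0 : 0 < w0) (he : 0 < e0)
    (hε : 0 < ε) (hq3 : r ^ 2 * q3 ≤ 0) (hC : 2 * r * q2 + 3 * r ^ 2 ≤ C)
    (hD : 0 ≤ (2 * r * w0 * q2 + r ^ 2 * q3 + 3 * r ^ 2 * w0) * e0
      + w0 * (e0 * (-(C + 1) * 1)) - ε * 1) : False := by
  have h1 : (2 * r * q2 + 3 * r ^ 2) * w0 ≤ C * w0 := mul_le_mul_of_nonneg_right hC hw0.le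
  have h1e := mul_le_mul_of_nonneg_right h1 he.le
  have hq3e : r ^ 2 * q3 * e0 ≤ 0 := mul_nonpos_of_nonpos_of_nonneg hq3 he.le
  have hpos := mul_pos hw0 he
  nlinarith [h1e, hq3e, hpos]

/-- Along the (unnormalized) curvature flow in tangent-angle
coordinates, `∂_t ρ = ρ² ∂²_θ ρ + ρ³`, if the solution is `G_n`-symmetric
(`ρ(t,−θ) = ρ(t,θ)` and `2π/n`-periodic) and the initial curvature is non-increasing
in `θ` on `[0, π/n]` (i.e. the initial curve is in the class `S_n^↓`), then the
curvature remains non-increasing in `θ` on `[0, π/n]` for all times: `S_n^↓` is stable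
under the curvature flow. -/
theorem stmt17 (n : ℕ) (hn : 2 ≤ n) (T : ℝ) (ρ : ℝ → ℝ → ℝ)
    (hsmooth : ContDiffOn ℝ (⊤ : ℕ∞) (Function.uncurry ρ) (Ico 0 T ×ˢ (univ : Set ℝ)))
    (hpos : ∀ t ∈ Ico (0:ℝ) T, ∀ θ : ℝ, 0 < ρ t θ)
    (hper : ∀ t ∈ Ico (0:ℝ) T, ∀ θ : ℝ, ρ t (θ + 2 * π) = ρ t θ)
    (hc : ∀ t ∈ Ico (0:ℝ) T, (∫ θ in (0:ℝ)..(2 * π), Real.cos θ / ρ t θ) = 0)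
    (hc' : ∀ t ∈ Ico (0:ℝ) T, (∫ θ in (0:ℝ)..(2 * π), Real.sin θ / ρ t θ) = 0)
    (hsym : ∀ t ∈ Ico (0:ℝ) T, ∀ θ : ℝ, ρ t (-θ) = ρ t θ)
    (hsymn : ∀ t ∈ Ico (0:ℝ) T, ∀ θ : ℝ, ρ t (θ + 2 * π / n) = ρ t θ)
    (hPDE : ∀ t ∈ Ico (0:ℝ) T, ∀ θ : ℝ,
      HasDerivWithinAt (fun s => ρ s θ)
        ((ρ t θ) ^ 2 * iteratedDeriv 2 (ρ t) θ + (ρ t θ) ^ 3) (Ico 0 T) t)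
    (hinit : ∀ θ ∈ Icc (0:ℝ) (π / n), deriv (ρ 0) θ ≤ 0) :
    ∀ t ∈ Ico (0:ℝ) T, ∀ θ ∈ Icc (0:ℝ) (π / n), deriv (ρ t) θ ≤ 0 := by
  have hn0 : (0:ℝ) < (n:ℝ) := by exact_mod_cast Nat.lt_of_lt_of_le Nat.zero_lt_two hn
  have hπn : 0 < π / n := div_pos Real.pi_pos hn0
  intro t1 ht1 θstar hθstar
  have hT : (0:ℝ) < T := lt_of_le_of_lt ht1.1 ht1.2
  set S : Set (ℝ × ℝ) := Ico 0 T ×ˢ (univ : Set ℝ) with hSdef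
  have hS : UniqueDiffOn ℝ S := (uniqueDiffOn_Ico 0 T).prod uniqueDiffOn_univ
  set f : ℝ × ℝ → ℝ := Function.uncurry ρ with hfdef
  have hmemS : ∀ s ∈ Ico (0:ℝ) T, ∀ x : ℝ, ((s, x) : ℝ × ℝ) ∈ S :=
    fun s hs x => ⟨hs, mem_univ x⟩
  -- slice lemma: a θ-partial derivative of a function differentiable within S
  have slice : ∀ (φ : ℝ × ℝ → ℝ) (L : ℝ × ℝ →L[ℝ] ℝ) (s x : ℝ), s ∈ Ico (0:ℝ) T →
      HasFDerivWithinAt φ L S (s, x) → HasDerivAt (fun y => φ (s, y)) (L (0, 1)) x := by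
    intro φ L s x hs hL
    have hj : HasDerivAt (fun y : ℝ => ((s, y) : ℝ × ℝ)) ((0:ℝ), (1:ℝ)) x :=
      HasDerivAt.prodMk (hasDerivAt_const x s) (hasDerivAt_id x)
    have h := hL.comp_hasDerivWithinAt x (hj.hasDerivWithinAt (s := univ)) (fun y _ => hmemS s hs y)
    exact (hasDerivWithinAt_univ.mp h)
  -- first θ-derivative as a jointly smooth function
  have hfd : ContDiffOn ℝ (⊤ : ℕ∞) (fderivWithin ℝ f S) S := hsmooth.fderivWithin hS (by simp)
  set Φ : (ℝ × ℝ →L[ℝ] ℝ) →L[ℝ] ℝ := ContinuousLinearMap.apply ℝ ℝ ((0:ℝ), (1:ℝ)) with hΦdef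
  set W1 : ℝ × ℝ → ℝ := fun z => fderivWithin ℝ f S z (0, 1) with hW1def
  have hW1smooth : ContDiffOn ℝ (⊤ : ℕ∞) W1 S := Φ.contDiff.comp_contDiffOn hfd
  have hw1 : ∀ s ∈ Ico (0:ℝ) T, ∀ x : ℝ, HasDerivAt (ρ s) (W1 (s, x)) x := by
    intro s hs x
    exact slice f _ s x hs (hsmooth.differentiableOn (by simp) (s, x) (hmemS s hs x)).hasFDerivWithinAt
  have hw1deriv : ∀ s ∈ Ico (0:ℝ) T, ∀ x : ℝ, deriv (ρ s) x = W1 (s, x) :=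
    fun s hs x => (hw1 s hs x).deriv
  -- second θ-derivative as a jointly smooth function
  set W2 : ℝ × ℝ → ℝ := fun z => fderivWithin ℝ W1 S z (0, 1) with hW2def
  have hW1d : ContDiffOn ℝ (⊤ : ℕ∞) (fderivWithin ℝ W1 S) S := hW1smooth.fderivWithin hS (by simp)
  have hW2smooth : ContDiffOn ℝ (⊤ : ℕ∞) W2 S := Φ.contDiff.comp_contDiffOn hW1d
  have hw2 : ∀ s ∈ Ico (0:ℝ) T, ∀ x : ℝ, HasDerivAt (fun y => W1 (s, y)) (W2 (s, x)) x := by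
    intro s hs x
    exact slice W1 _ s x hs
      (hW1smooth.differentiableOn (by simp) (s, x) (hmemS s hs x)).hasFDerivWithinAt
  have hρ2W2 : ∀ s ∈ Ico (0:ℝ) T, ∀ x : ℝ, iteratedDeriv 2 (ρ s) x = W2 (s, x) := by
    intro s hs x
    have h1 : deriv (ρ s) = fun y => W1 (s, y) := funext fun y => (hw1 s hs y).deriv
    rw [show (2:ℕ) = 1 + 1 from rfl, iteratedDeriv_succ, iteratedDeriv_one, h1]
    exact (hw2 s hs x).deriv
  -- each time-slice is smooth in θ
  have hsliceC : ∀ s ∈ Ico (0:ℝ) T, ContDiff ℝ (⊤ : ℕ∞) (ρ s) := by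
    intro s hs
    have hj : ContDiff ℝ (⊤ : ℕ∞) (fun y : ℝ => ((s, y) : ℝ × ℝ)) := contDiff_const.prodMk contDiff_id
    have h := hsmooth.comp (hj.contDiffOn (s := univ)) (fun y _ => hmemS s hs y)
    exact contDiffOn_univ.mp h
  -- boundary conditions from symmetry
  have hbd0 : ∀ s ∈ Ico (0:ℝ) T, deriv (ρ s) 0 = 0 := by
    intro s hs
    have hd : HasDerivAt (ρ s) (deriv (ρ s) 0) 0 :=
      (((hsliceC s hs).differentiable (by simp)) 0).hasDerivAt
    have hneg : HasDerivAt (fun x : ℝ => ρ s (-x)) (deriv (ρ s) 0 * (-1)) 0 := by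
      have hinner : HasDerivAt (fun x : ℝ => -x) (-1 : ℝ) 0 := hasDerivAt_neg 0
      have hd' : HasDerivAt (ρ s) (deriv (ρ s) 0) (-0 : ℝ) := by rw [neg_zero]; exact hd
      have := hd'.comp (0:ℝ) hinner
      exact this
    have heq : (fun x : ℝ => ρ s (-x)) = ρ s := funext fun x => hsym s hs x
    rw [heq] at hneg
    have := hd.unique hneg
    linarith
  have hbdn : ∀ s ∈ Ico (0:ℝ) T, deriv (ρ s) (π / n) = 0 := by
    intro s hs
    have hd : HasDerivAt (ρ s) (deriv (ρ s) (π / n)) (π / n) :=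
      (((hsliceC s hs).differentiable (by simp)) _).hasDerivAt
    have hrefl : (fun x : ℝ => ρ s (2 * π / n - x)) = ρ s := by
      funext x
      have h1 := hsym s hs (x - 2 * π / n)
      have h2 := hsymn s hs (x - 2 * π / n)
      have h3 : -(x - 2 * π / n) = 2 * π / n - x := by ring
      have h4 : x - 2 * π / n + 2 * π / n = x := by ring
      rw [h3] at h1; rw [h4] at h2
      rw [h1, h2]
    have hinner : HasDerivAt (fun x : ℝ => 2 * π / n - x) (-1 : ℝ) (π / n) := by
      exact (hasDerivAt_id' (π / n)).const_sub (2 * π / n)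
    have h5 : (2 : ℝ) * π / n - π / n = π / n := by ring
    have hd' : HasDerivAt (ρ s) (deriv (ρ s) (π / n)) (2 * π / n - π / n) := by rw [h5]; exact hd
    have hneg : HasDerivAt (fun x : ℝ => ρ s (2 * π / n - x)) (deriv (ρ s) (π / n) * (-1)) (π / n) := by
      have := hd'.comp (π / n) hinner
      exact this
    rw [hrefl] at hneg
    have := hd.unique hneg
    linarith
  -- compact space-time box and the bound on the zeroth-order coefficient
  set K : Set (ℝ × ℝ) := Icc 0 t1 ×ˢ Icc 0 (π / n) with hKdef
  have hKS : K ⊆ S :=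
    prod_mono (fun x hx => ⟨hx.1, lt_of_le_of_lt hx.2 ht1.2⟩) (subset_univ _)
  have hKIco : ∀ z ∈ K, z.1 ∈ Ico (0:ℝ) T := fun z hz => (hKS hz).1
  have hKcpt : IsCompact K := isCompact_Icc.prod isCompact_Icc
  have hKne : K.Nonempty :=
    ⟨(0, 0), mem_prod.mpr ⟨⟨le_refl _, ht1.1⟩, ⟨le_refl _, hπn.le⟩⟩⟩
  set cfun : ℝ × ℝ → ℝ := fun z => 2 * f z * W2 z + 3 * f z ^ 2 with hcdef
  have hccont : ContinuousOn cfun K := by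
    have h1 : ContinuousOn f K := hsmooth.continuousOn.mono hKS
    have h2 : ContinuousOn W2 K := hW2smooth.continuousOn.mono hKS
    exact ((continuousOn_const.mul h1).mul h2).add (continuousOn_const.mul (h1.pow 2))
  obtain ⟨C, hCb⟩ : ∃ C : ℝ, ∀ z ∈ K, 2 * ρ z.1 z.2 * W2 z + 3 * ρ z.1 z.2 ^ 2 ≤ C := by
    obtain ⟨zC, hzCK, hzCmax⟩ := hKcpt.exists_isMaxOn hKne hccont
    exact ⟨cfun zC, fun z hz => hzCmax hz⟩
  -- the key estimate, for every ε > 0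
  have key : ∀ ε : ℝ, 0 < ε → ∀ z ∈ K,
      deriv (ρ z.1) z.2 * Real.exp (-(C + 1) * z.1) - ε * z.1 ≤ 0 := by
    intro ε hε
    by_contra hcon
    push_neg at hcon
    obtain ⟨zbad, hzbadK, hzbad⟩ := hcon
    set u : ℝ × ℝ → ℝ :=
      fun z => deriv (ρ z.1) z.2 * Real.exp (-(C + 1) * z.1) - ε * z.1 with hudef
    have hucont : ContinuousOn u K := by
      have h1 : ContinuousOn (fun z : ℝ × ℝ =>
          W1 z * Real.exp (-(C + 1) * z.1) - ε * z.1) K := by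
        refine ((hW1smooth.continuousOn.mono hKS).mul ?_).sub
          (continuous_const.mul continuous_fst).continuousOn
        exact (Real.continuous_exp.comp (continuous_const.mul continuous_fst)).continuousOn
      refine h1.congr ?_
      intro z hz
      have := hw1deriv z.1 (hKIco z hz) z.2
      simp only [hudef, this]
    obtain ⟨⟨s0, θ0⟩, hz0K, hz0max⟩ := hKcpt.exists_isMaxOn hKne hucont
    have hupos : 0 < u (s0, θ0) := lt_of_lt_of_le hzbad (hz0max hzbadK)
    have hs0I : s0 ∈ Icc 0 t1 := (mem_prod.mp hz0K).1
    have hθ0I : θ0 ∈ Icc 0 (π / n) := (mem_prod.mp hz0K).2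
    have hs0Ico : s0 ∈ Ico (0:ℝ) T := ⟨hs0I.1, lt_of_le_of_lt hs0I.2 ht1.2⟩
    have hepos : 0 < Real.exp (-(C + 1) * s0) := Real.exp_pos _
    have hw0pos : 0 < deriv (ρ s0) θ0 := by
      by_contra hw0
      push_neg at hw0
      have h1 : deriv (ρ s0) θ0 * Real.exp (-(C + 1) * s0) ≤ 0 :=
        mul_nonpos_of_nonpos_of_nonneg hw0 hepos.le
      have h2 : 0 ≤ ε * s0 := mul_nonneg hε.le hs0I.1
      simp only [hudef] at hupos
      linarith
    -- θ0 is in the open interval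
    have hθ0ne0 : θ0 ≠ 0 := by
      intro h; rw [h] at hw0pos; rw [hbd0 s0 hs0Ico] at hw0pos; exact lt_irrefl 0 hw0pos
    have hθ0neπ : θ0 ≠ π / n := by
      intro h; rw [h] at hw0pos; rw [hbdn s0 hs0Ico] at hw0pos; exact lt_irrefl 0 hw0pos
    have hθ0Ioo : θ0 ∈ Ioo 0 (π / n) :=
      ⟨lt_of_le_of_ne hθ0I.1 (Ne.symm hθ0ne0), lt_of_le_of_ne hθ0I.2 hθ0neπ⟩
    -- s0 is positive
    have hs0pos : 0 < s0 := by
      rcases lt_or_eq_of_le hs0I.1 with h | h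
      · exact h
      · exfalso
        have h0 : deriv (ρ 0) θ0 ≤ 0 := hinit θ0 hθ0I
        rw [← h] at hw0pos
        exact absurd h0 (not_le.mpr hw0pos)
    have hs0mem : s0 ∈ Ioo (0:ℝ) T := ⟨hs0pos, lt_of_le_of_lt hs0I.2 ht1.2⟩
    -- maximum in θ at fixed time s0
    have hmaxψ : IsMaxOn (deriv (ρ s0)) (Icc 0 (π / n)) θ0 := by
      intro x hx
      have hmem : ((s0, x) : ℝ × ℝ) ∈ K := mem_prod.mpr ⟨hs0I, hx⟩
      have := hz0max hmem
      simp only [hudef] at this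
      have := sub_le_sub_iff_right (ε * s0) |>.mp this
      exact le_of_mul_le_mul_right this hepos
    -- second-derivative test: third derivative of ρ s0 at θ0 is ≤ 0
    have hρs0 : ContDiff ℝ (⊤ : ℕ∞) (ρ s0) := hsliceC s0 hs0Ico
    have hrsm : ContDiff ℝ ∞ (ρ s0) := hρs0.of_le (by simp)
    set ψ : ℝ → ℝ := deriv (ρ s0) with hψdef
    have hψC : ContDiff ℝ ∞ ψ := (contDiff_infty_iff_deriv.mp hrsm).2
    have hψ'C : ContDiff ℝ ∞ (deriv ψ) := (contDiff_infty_iff_deriv.mp hψC).2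
    have hψ''cont : Continuous (deriv (deriv ψ)) :=
      ((contDiff_infty_iff_deriv.mp hψ'C).2).continuous
    have hiter3 : iteratedDeriv 3 (ρ s0) = deriv (deriv ψ) := by
      rw [show (3:ℕ) = 2 + 1 from rfl, iteratedDeriv_succ,
        show (2:ℕ) = 1 + 1 from rfl, iteratedDeriv_succ, iteratedDeriv_one, hψdef]
    have h3 : iteratedDeriv 3 (ρ s0) θ0 ≤ 0 := by
      by_contra h3pos
      push_neg at h3pos
      rw [hiter3] at h3pos
      have hd0 : deriv ψ θ0 = 0 :=
        (hmaxψ.isLocalMax (Icc_mem_nhds hθ0Ioo.1 hθ0Ioo.2)).deriv_eq_zero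
      have hev : ∀ᶠ x in 𝓝 θ0, deriv (deriv ψ) x ∈ Ioi (0:ℝ) :=
        hψ''cont.continuousAt.eventually_mem (isOpen_Ioi.mem_nhds h3pos)
      obtain ⟨δ, hδ, hball⟩ := Metric.eventually_nhds_iff.mp hev
      set b : ℝ := min (θ0 + δ / 2) ((θ0 + π / n) / 2) with hbdefn
      have hθ0b : θ0 < b := lt_min (by linarith) (by nlinarith [hθ0Ioo.2])
      have hbπ : b ≤ π / n := le_trans (min_le_right _ _) (by nlinarith [hθ0Ioo.2])
      have hIccball : ∀ x ∈ Icc θ0 b, dist x θ0 < δ := by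
        intro x hx
        rw [Real.dist_eq, abs_lt]
        have h1 : x ≤ θ0 + δ / 2 := le_trans hx.2 (min_le_left _ _)
        constructor <;> [linarith [hx.1]; linarith]
      have mono1 : StrictMonoOn (deriv ψ) (Icc θ0 b) := by
        refine strictMonoOn_of_deriv_pos (convex_Icc _ _) hψ'C.continuous.continuousOn ?_
        intro x hx
        rw [interior_Icc] at hx
        exact hball (hIccball x (Ioo_subset_Icc_self hx))
      have hψ'pos : ∀ x ∈ Ioo θ0 b, 0 < deriv ψ x := by
        intro x hx
        have := mono1 ⟨le_refl _, hθ0b.le⟩ ⟨hx.1.le, hx.2.le⟩ hx.1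
        rw [hd0] at this
        exact this
      have mono2 : StrictMonoOn ψ (Icc θ0 b) := by
        refine strictMonoOn_of_deriv_pos (convex_Icc _ _) hψC.continuous.continuousOn ?_
        intro x hx
        rw [interior_Icc] at hx
        exact hψ'pos x hx
      have hlt : ψ θ0 < ψ b := mono2 ⟨le_refl _, hθ0b.le⟩ ⟨hθ0b.le, le_refl _⟩ hθ0b
      have hle : ψ b ≤ ψ θ0 := hmaxψ ⟨le_trans hθ0Ioo.1.le hθ0b.le, hbπ⟩
      linarith
    -- time derivative of the θ-derivative via symmetry of second derivatives
    set V : Set (ℝ × ℝ) := Ioo 0 T ×ˢ (univ : Set ℝ) with hVdef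
    have hVopen : IsOpen V := isOpen_Ioo.prod isOpen_univ
    have hVS : V ⊆ S := prod_mono Ioo_subset_Ico_self (subset_refl _)
    have hVIco : ∀ z ∈ V, z.1 ∈ Ico (0:ℝ) T := fun z hz => (hVS hz).1
    have hz0V : ((s0, θ0) : ℝ × ℝ) ∈ V := ⟨hs0mem, mem_univ _⟩
    have hfV : ContDiffOn ℝ (⊤ : ℕ∞) f V := hsmooth.mono hVS
    set G : ℝ × ℝ → (ℝ × ℝ →L[ℝ] ℝ) := fun z => fderivWithin ℝ f V z with hGdef
    have hGdiffat : ∀ z ∈ V, HasFDerivAt f (G z) z := by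
      intro z hz
      have hda : DifferentiableAt ℝ f z :=
        (hfV.differentiableOn (by simp) z hz).differentiableAt (hVopen.mem_nhds hz)
      have : G z = fderiv ℝ f z := fderivWithin_of_isOpen hVopen hz
      rw [this]
      exact hda.hasFDerivAt
    have hGsm : ContDiffOn ℝ (⊤ : ℕ∞) G V := hfV.fderivWithin hVopen.uniqueDiffOn (by simp)
    set G' : ℝ × ℝ →L[ℝ] (ℝ × ℝ →L[ℝ] ℝ) := fderivWithin ℝ G V (s0, θ0) with hG'def
    have hG' : HasFDerivAt G G' (s0, θ0) := by
      have hda : DifferentiableAt ℝ G (s0, θ0) :=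
        (hGsm.differentiableOn (by simp) _ hz0V).differentiableAt (hVopen.mem_nhds hz0V)
      have : G' = fderiv ℝ G (s0, θ0) := fderivWithin_of_isOpen hVopen hz0V
      rw [this]
      exact hda.hasFDerivAt
    have hsymm : ∀ v w : ℝ × ℝ, G' v w = G' w v := fun v w =>
      second_derivative_symmetric_of_eventually
        (Filter.eventually_of_mem (hVopen.mem_nhds hz0V) hGdiffat) hG' v w
    -- slices of the full derivative
    have sliceθ : ∀ z : ℝ × ℝ, z ∈ V → HasDerivAt (fun y => ρ z.1 y) (G z (0, 1)) z.2 := by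
      intro z hz
      have hj : HasDerivAt (fun y : ℝ => ((z.1, y) : ℝ × ℝ)) ((0:ℝ), (1:ℝ)) z.2 :=
        HasDerivAt.prodMk (hasDerivAt_const z.2 z.1) (hasDerivAt_id z.2)
      exact (hGdiffat z hz).comp_hasDerivAt z.2 hj
    have slicet : ∀ z : ℝ × ℝ, z ∈ V → HasDerivAt (fun s => ρ s z.2) (G z (1, 0)) z.1 := by
      intro z hz
      have hj : HasDerivAt (fun s : ℝ => ((s, z.2) : ℝ × ℝ)) ((1:ℝ), (0:ℝ)) z.1 :=
        HasDerivAt.prodMk (hasDerivAt_id z.1) (hasDerivAt_const z.1 z.2)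
      exact (hGdiffat z hz).comp_hasDerivAt z.1 hj
    have hGt : ∀ z ∈ V, G z (1, 0) =
        ρ z.1 z.2 ^ 2 * iteratedDeriv 2 (ρ z.1) z.2 + ρ z.1 z.2 ^ 3 := by
      intro z hz
      have h1 := slicet z hz
      have h2 : HasDerivAt (fun s => ρ s z.2)
          (ρ z.1 z.2 ^ 2 * iteratedDeriv 2 (ρ z.1) z.2 + ρ z.1 z.2 ^ 3) z.1 := by
        refine (hPDE z.1 (hVIco z hz) z.2).hasDerivAt ?_
        exact mem_of_superset (isOpen_Ioo.mem_nhds hz.1) Ioo_subset_Ico_self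
      exact h1.unique h2
    -- time derivative of s ↦ deriv (ρ s) θ0 at s0
    have hline : HasDerivAt (fun s : ℝ => ((s, θ0) : ℝ × ℝ)) ((1:ℝ), (0:ℝ)) s0 :=
      HasDerivAt.prodMk (hasDerivAt_id s0) (hasDerivAt_const s0 θ0)
    have hA1 : HasDerivAt (fun s => G (s, θ0) ((0:ℝ), (1:ℝ))) (G' (1, 0) (0, 1)) s0 := by
      have h := hG'.comp_hasDerivAt s0 hline
      have h2 := h.clm_apply (hasDerivAt_const s0 ((0:ℝ), (1:ℝ)))
      simpa using h2
    have hBev : (fun s => deriv (ρ s) θ0) =ᶠ[𝓝 s0] (fun s => G (s, θ0) ((0:ℝ), (1:ℝ))) := by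
      filter_upwards [isOpen_Ioo.mem_nhds hs0mem] with s hs
      exact ((sliceθ (s, θ0) ⟨hs, mem_univ _⟩).deriv)
    have hwt : HasDerivAt (fun s => deriv (ρ s) θ0) (G' (1, 0) (0, 1)) s0 :=
      hA1.congr_of_eventuallyEq hBev
    -- identify the mixed derivative with the θ-derivative of the PDE right-hand side
    have hC1 : HasDerivAt (fun y => G (s0, y) ((1:ℝ), (0:ℝ))) (G' (0, 1) (1, 0)) θ0 := by
      have hj : HasDerivAt (fun y : ℝ => ((s0, y) : ℝ × ℝ)) ((0:ℝ), (1:ℝ)) θ0 :=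
        HasDerivAt.prodMk (hasDerivAt_const θ0 s0) (hasDerivAt_id θ0)
      have h := hG'.comp_hasDerivAt θ0 hj
      have h2 := h.clm_apply (hasDerivAt_const θ0 ((1:ℝ), (0:ℝ)))
      simpa using h2
    have hFeq : (fun y => G (s0, y) ((1:ℝ), (0:ℝ))) =
        fun y => ρ s0 y ^ 2 * iteratedDeriv 2 (ρ s0) y + ρ s0 y ^ 3 :=
      funext fun y => hGt (s0, y) ⟨hs0mem, mem_univ _⟩
    rw [hFeq] at hC1
    have hρ0 : HasDerivAt (ρ s0) (deriv (ρ s0) θ0) θ0 :=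
      ((hρs0.differentiable (by simp)) θ0).hasDerivAt
    have hρ2d : HasDerivAt (iteratedDeriv 2 (ρ s0)) (iteratedDeriv 3 (ρ s0) θ0) θ0 := by
      have h2C : ContDiff ℝ ∞ (iteratedDeriv 2 (ρ s0)) := by
        rw [iteratedDeriv_eq_iterate]
        exact hrsm.iterate_deriv 2
      have hdd : DifferentiableAt ℝ (iteratedDeriv 2 (ρ s0)) θ0 := by
        have h1 : (1 : WithTop ℕ∞) ≤ ∞ := by exact_mod_cast (le_top : (1:ℕ∞) ≤ ⊤)
        exact (h2C.differentiable (by simp)) θ0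
      have := hdd.hasDerivAt
      rwa [show deriv (iteratedDeriv 2 (ρ s0)) θ0 = iteratedDeriv 3 (ρ s0) θ0 from by
        rw [← iteratedDeriv_succ]] at this
    have hFd := ((hρ0.pow 2).mul hρ2d).add (hρ0.pow 3)
    have hAval : G' (0, 1) (1, 0) =
        2 * ρ s0 θ0 * deriv (ρ s0) θ0 * iteratedDeriv 2 (ρ s0) θ0
          + ρ s0 θ0 ^ 2 * iteratedDeriv 3 (ρ s0) θ0
          + 3 * ρ s0 θ0 ^ 2 * deriv (ρ s0) θ0 := by
      have := hC1.unique hFd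
      rw [this]
      push_cast
      simp only [Pi.pow_apply]
      ring
    have hwt2 : HasDerivAt (fun s => deriv (ρ s) θ0) (G' (0, 1) (1, 0)) s0 := by
      rw [← hsymm (1, 0) (0, 1)]
      exact hwt
    -- derivative of the auxiliary function in time
    have hexp : HasDerivAt (fun s : ℝ => Real.exp (-(C + 1) * s))
        (Real.exp (-(C + 1) * s0) * (-(C + 1) * 1)) s0 :=
      (HasDerivAt.const_mul (-(C + 1)) (hasDerivAt_id s0)).exp
    have hζd : HasDerivAt (fun s => deriv (ρ s) θ0 * Real.exp (-(C + 1) * s) - ε * s)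
        (G' (0, 1) (1, 0) * Real.exp (-(C + 1) * s0)
          + deriv (ρ s0) θ0 * (Real.exp (-(C + 1) * s0) * (-(C + 1) * 1)) - ε * 1) s0 :=
      (hwt2.mul hexp).sub (HasDerivAt.const_mul ε (hasDerivAt_id s0))
    -- nonnegativity of the time derivative at the interior maximum
    have hD0 : 0 ≤ G' (0, 1) (1, 0) * Real.exp (-(C + 1) * s0)
        + deriv (ρ s0) θ0 * (Real.exp (-(C + 1) * s0) * (-(C + 1) * 1)) - ε * 1 := by
      set ζ : ℝ → ℝ := fun s => deriv (ρ s) θ0 * Real.exp (-(C + 1) * s) - ε * s with hζdef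
      have hslope := hasDerivWithinAt_iff_tendsto_slope.mp (hζd.hasDerivWithinAt (s := Iio s0))
      have hIio : Iio s0 \ {s0} = Iio s0 := diff_singleton_eq_self (fun h => lt_irrefl s0 h)
      rw [hIio] at hslope
      have hev : ∀ᶠ s in 𝓝[Iio s0] s0, 0 ≤ slope ζ s0 s := by
        filter_upwards [self_mem_nhdsWithin,
          mem_nhdsWithin_of_mem_nhds (Ioi_mem_nhds hs0pos)] with s hs1 hs2
        have hsK : ((s, θ0) : ℝ × ℝ) ∈ K :=
          mem_prod.mpr ⟨⟨le_of_lt hs2, le_trans (le_of_lt hs1) hs0I.2⟩, hθ0I⟩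
        have hle : ζ s ≤ ζ s0 := hz0max hsK
        rw [slope_def_field]
        exact div_nonneg_of_nonpos (by linarith) (by simp only [mem_Iio] at hs1; linarith)
      exact ge_of_tendsto hslope hev
    -- final contradiction
    have hq2 : W2 (s0, θ0) = iteratedDeriv 2 (ρ s0) θ0 := (hρ2W2 s0 hs0Ico θ0).symm
    have hCbd : 2 * ρ s0 θ0 * iteratedDeriv 2 (ρ s0) θ0 + 3 * ρ s0 θ0 ^ 2 ≤ C := by
      have := hCb (s0, θ0) hz0K
      rwa [hq2] at this
    have hrpos : 0 < ρ s0 θ0 := hpos s0 hs0Ico θ0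
    have hq3 : ρ s0 θ0 ^ 2 * iteratedDeriv 3 (ρ s0) θ0 ≤ 0 :=
      mul_nonpos_of_nonneg_of_nonpos (sq_nonneg _) h3
    rw [hAval] at hD0
    exact stmt17_finalArith (ρ s0 θ0) (deriv (ρ s0) θ0) (iteratedDeriv 2 (ρ s0) θ0)
      (iteratedDeriv 3 (ρ s0) θ0) (Real.exp (-(C + 1) * s0)) C ε hw0pos hepos hε hq3 hCbd hD0
  -- conclude by letting ε → 0
  have hmemK : ((t1, θstar) : ℝ × ℝ) ∈ Icc 0 t1 ×ˢ Icc 0 (π / n) :=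
    mem_prod.mpr ⟨⟨ht1.1, le_refl _⟩, hθstar⟩
  have hfin : ∀ ε : ℝ, 0 < ε →
      deriv (ρ t1) θstar * Real.exp (-(C + 1) * t1) - ε * t1 ≤ 0 :=
    fun ε hε => key ε hε (t1, θstar) hmemK
  have he1 : 0 < Real.exp (-(C + 1) * t1) := Real.exp_pos _
  have hmain : deriv (ρ t1) θstar * Real.exp (-(C + 1) * t1) ≤ 0 := by
    by_contra h'
    push_neg at h'
    rcases eq_or_lt_of_le ht1.1 with h | h
    · have hk := hfin 1 one_pos
      rw [← h] at hk h'
      linarith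
    · have hεpos : 0 < deriv (ρ t1) θstar * Real.exp (-(C + 1) * t1) / (2 * t1) := by
        positivity
      have hkey := hfin _ hεpos
      have ht1ne : t1 ≠ 0 := ne_of_gt h
      have hcalc : deriv (ρ t1) θstar * Real.exp (-(C + 1) * t1) / (2 * t1) * t1
          = deriv (ρ t1) θstar * Real.exp (-(C + 1) * t1) / 2 := by
        field_simp
      rw [hcalc] at hkey
      linarith
  by_contra hd
  push_neg at hd
  nlinarith [mul_pos hd he1]

end
end

section
/- Let n ≥ 2 and let p : ℝ → ℝ be a smooth 2π-periodic function with p(θ) + p''(θ) > 0 for all θ (the support function of a strictly convex body), satisfying the symmetries p(−θ) = p(θ) and p(θ + 2π/n) = p(θ) (so its Fourier expansion is p(θ) = a₀ + Σ_{k≥1} a_k cos(knθ)). Let σ = ∫₀^{2π} p(θ) dθ be the perimeter and λ = ½ ∫₀^{2π} p(θ)(p(θ) + p''(θ)) dθ the area. Suppose L ≥ 0 is such that |p'(θ)/sin θ| ≤ L/n for all θ ∈ (0, π/n) (L is the total length of the star-shaped skeleton, whose branches have length at most L/n). Then 0 ≤ σ² − 4πλ ≤ (2π²/n²) L² (1 −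 sin(2π/n)/(2π/n)) ≤ (4π⁴/(3n⁴)) L². Combined with Bonnesen's inequality π²(r_out − r_int)² ≤ σ² − 4πλ, this bounds the difference between circumradius and inradius by a quantity of order L/n². -/
open Real Set Filter MeasureTheory Topology intervalIntegral

noncomputable section

/-- Cauchy–Schwarz on an interval for a continuous function. -/
lemma aux_cs (f : ℝ → ℝ) (hf : Continuous f) (u v : ℝ) (huv : u ≤ v) :
    (∫ x in u..v, f x) ^ 2 ≤ (v - u) * ∫ x in u..v, (f x) ^ 2 := by
  set F : ℝ → ℝ := fun t => ∫ x in u..t, f x with hF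
  set F2 : ℝ → ℝ := fun t => ∫ x in u..t, (f x) ^ 2 with hF2
  have hFd : ∀ t : ℝ, HasDerivAt F (f t) t := fun t =>
    intervalIntegral.integral_hasDerivAt_right (hf.intervalIntegrable u t)
      (hf.stronglyMeasurable.stronglyMeasurableAtFilter) hf.continuousAt
  have hF2d : ∀ t : ℝ, HasDerivAt F2 ((f t) ^ 2) t := fun t =>
    intervalIntegral.integral_hasDerivAt_right ((hf.pow 2).intervalIntegrable u t)
      ((hf.pow 2).stronglyMeasurable.stronglyMeasurableAtFilter) (hf.pow 2).continuousAt
  set G : ℝ → ℝ := fun t => (t - u) * F2 t - (F t) ^ 2 with hG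
  have hGd : ∀ t : ℝ, HasDerivAt G (F2 t + (t - u) * (f t) ^ 2 - 2 * F t * f t) t := by
    intro t
    have h1 : HasDerivAt (fun t : ℝ => (t - u) * F2 t) (1 * F2 t + (t - u) * (f t) ^ 2) t :=
      ((hasDerivAt_id t).sub_const u).mul (hF2d t)
    have h2 : HasDerivAt (fun t : ℝ => (F t) ^ 2) (2 * F t * f t) t := by
      have := (hFd t).fun_pow 2
      simpa [mul_comm, mul_assoc, pow_one] using this
    simpa [one_mul] using h1.fun_sub h2
  have hderiv_nonneg : ∀ t : ℝ, u ≤ t → 0 ≤ F2 t + (t - u) * (f t) ^ 2 - 2 * F t * f t := by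
    intro t ht
    have key : F2 t + (t - u) * (f t) ^ 2 - 2 * F t * f t
        = ∫ x in u..t, (f x - f t) ^ 2 := by
      have : ∀ x : ℝ, (f x - f t) ^ 2 = (f x) ^ 2 - (2 * f t) * f x + (f t) ^ 2 := by
        intro x; ring
      rw [intervalIntegral.integral_congr (g := fun x => (f x) ^ 2 - (2 * f t) * f x + (f t) ^ 2)
        (fun x _ => this x)]
      rw [intervalIntegral.integral_add (f := fun x => f x ^ 2 - 2 * f t * f x) (g := fun _ => f t ^ 2) (((hf.pow 2).sub ((continuous_const.mul hf))).intervalIntegrable u t)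
        (intervalIntegrable_const),
        intervalIntegral.integral_sub (f := fun x => f x ^ 2) (g := fun x => 2 * f t * f x) ((hf.pow 2).intervalIntegrable u t)
        ((continuous_const.mul hf).intervalIntegrable u t),
        intervalIntegral.integral_const_mul, intervalIntegral.integral_const]
      simp only [smul_eq_mul, hF, hF2]
      ring
    rw [key]
    exact intervalIntegral.integral_nonneg ht (fun x _ => sq_nonneg _)
  have hmono : MonotoneOn G (Icc u v) := by
    apply monotoneOn_of_deriv_nonneg (convex_Icc u v)
    · exact fun t _ => ((hGd t).differentiableAt).continuousAt.continuousWithinAt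
    · exact fun t _ => ((hGd t).differentiableAt).differentiableWithinAt
    · intro t ht
      rw [interior_Icc] at ht
      rw [(hGd t).deriv]
      exact hderiv_nonneg t ht.1.le
  have h0 : G u = 0 := by simp [hG, hF, hF2]
  have := hmono (left_mem_Icc.mpr huv) (right_mem_Icc.mpr huv) huv
  rw [h0] at this
  have : 0 ≤ (v - u) * F2 v - (F v) ^ 2 := this
  linarith

/-- `x - x^3/6 ≤ sin x` for `0 ≤ x`. -/
lemma aux_sin_lb {x : ℝ} (hx : 0 ≤ x) : x - x ^ 3 / 6 ≤ Real.sin x := by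
  have hmono : MonotoneOn (fun x : ℝ => Real.sin x - x + x ^ 3 / 6) (Icc 0 x) := by
    apply monotoneOn_of_deriv_nonneg (convex_Icc 0 x)
    · exact (Real.continuous_sin.sub continuous_id').add
        ((continuous_pow 3).div_const 6) |>.continuousOn
    · intro t _
      apply DifferentiableAt.differentiableWithinAt
      exact (Real.differentiable_sin t |>.sub (differentiable_id t)).add
        (((differentiable_pow 3) t).div_const 6)
    · intro t _
      have hd : HasDerivAt (fun x : ℝ => Real.sin x - x + x ^ 3 / 6)
          (Real.cos t - 1 + 3 * t ^ 2 / 6) t := by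
        have := ((Real.hasDerivAt_sin t).fun_sub (hasDerivAt_id t)).fun_add
          (((hasDerivAt_pow 3 t)).div_const 6)
        simpa using this
      rw [hd.deriv]
      nlinarith [Real.one_sub_sq_div_two_le_cos (x := t)]
  have h := hmono (left_mem_Icc.mpr hx) (right_mem_Icc.mpr hx) hx
  simp only [Real.sin_zero] at h
  nlinarith [h]

/-- Reduction of the integral of an even periodic function to a half period. -/
lemma aux_reduce (g : ℝ → ℝ) (hg : Continuous g) (T : ℝ)
    (heven : ∀ x, g (-x) = g x) (hperT : Function.Periodic g T) (n : ℕ) :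
    ∫ x in (0:ℝ)..(n * T), g x = 2 * n * ∫ x in (0:ℝ)..(T / 2), g x := by
  have hint : ∀ t₁ t₂ : ℝ, IntervalIntegrable g MeasureSpace.volume t₁ t₂ :=
    fun t₁ t₂ => hg.intervalIntegrable t₁ t₂
  have step1 : ∫ x in (0:ℝ)..(n * T), g x = (n : ℝ) * ∫ x in (0:ℝ)..T, g x := by
    have := hperT.intervalIntegral_add_zsmul_eq (n : ℤ) 0 hint
    simpa [zsmul_eq_mul] using this
  have step2 : ∫ x in (0:ℝ)..T, g x = ∫ x in (-(T/2))..(T/2), g x := by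
    have := hperT.intervalIntegral_add_eq (-(T/2)) 0
    rw [zero_add] at this
    rw [← this, show -(T/2) + T = T/2 by ring]
  have step3 : ∫ x in (-(T/2))..(0:ℝ), g x = ∫ x in (0:ℝ)..(T/2), g x := by
    have h := intervalIntegral.integral_comp_neg (a := (0:ℝ)) (b := T/2) (f := g)
    simp only [neg_zero] at h
    rw [← h]
    exact intervalIntegral.integral_congr fun x _ => heven x
  have step4 : ∫ x in (-(T/2))..(T/2), g x
      = (∫ x in (-(T/2))..(0:ℝ), g x) + ∫ x in (0:ℝ)..(T/2), g x :=
    (intervalIntegral.integral_add_adjacent_intervals (hint _ _) (hint _ _)).symm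
  rw [step1, step2, step4, step3]; ring

set_option maxHeartbeats 1000000 in
/-- For a smooth `2π`-periodic support function `p` of a strictly
convex body (`p + p'' > 0`) with the `G_n`-symmetries, if `|p'(θ)/sin θ| ≤ L/n` on
`(0, π/n)` (the skeleton is star-shaped with total length `L`, its branches having
length at most `L/n`), then, with `σ = ∫₀^{2π} p dθ` and `λ = ½∫₀^{2π} p(p+p'') dθ`,
`0 ≤ σ² − 4πλ ≤ (2π²/n²) L² (1 − sin(2π/n)/(2π/n)) ≤ (4π⁴/(3n⁴)) L²`. -/
theorem stmt18 (n : ℕ) (hn : 2 ≤ n) (p : ℝ → ℝ)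
    (hp : ContDiff ℝ (⊤ : ℕ∞) p)
    (hconv : ∀ θ : ℝ, 0 < p θ + iteratedDeriv 2 p θ)
    (hper : ∀ θ : ℝ, p (θ + 2 * π) = p θ)
    (hsym : ∀ θ : ℝ, p (-θ) = p θ)
    (hsymn : ∀ θ : ℝ, p (θ + 2 * π / n) = p θ)
    (L : ℝ) (hL : 0 ≤ L)
    (hskel : ∀ θ ∈ Ioo (0:ℝ) (π / n), |deriv p θ / Real.sin θ| ≤ L / n) :
    0 ≤ (∫ θ in (0:ℝ)..(2 * π), p θ) ^ 2 -
        4 * π * ((1 / 2) * ∫ θ in (0:ℝ)..(2 * π), p θ * (p θ + iteratedDeriv 2 p θ)) ∧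
    (∫ θ in (0:ℝ)..(2 * π), p θ) ^ 2 -
        4 * π * ((1 / 2) * ∫ θ in (0:ℝ)..(2 * π), p θ * (p θ + iteratedDeriv 2 p θ)) ≤
      2 * π ^ 2 / n ^ 2 * L ^ 2 * (1 - Real.sin (2 * π / n) / (2 * π / n)) ∧
    2 * π ^ 2 / n ^ 2 * L ^ 2 * (1 - Real.sin (2 * π / n) / (2 * π / n)) ≤
      4 * π ^ 4 / (3 * n ^ 4) * L ^ 2 := by
  have hπ : (0:ℝ) < π := Real.pi_pos
  have hN : (0:ℝ) < (n:ℝ) := by exact_mod_cast (by omega : 0 < n)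
  have hN2 : (2:ℝ) ≤ (n:ℝ) := by exact_mod_cast hn
  set a : ℝ := π / n with ha_def
  have ha : 0 < a := by positivity
  have haπ2 : a ≤ π / 2 := by
    rw [ha_def, div_le_div_iff₀ hN (by norm_num)]
    nlinarith
  -- smoothness
  have hpi : ContDiff ℝ (⊤:ℕ∞) p := hp.of_le (by simp)
  have hdp : Differentiable ℝ p := hpi.differentiable (by simp)
  have hp' : ContDiff ℝ (⊤:ℕ∞) (deriv p) := (contDiff_infty_iff_deriv.mp hpi).2
  have hdp' : Differentiable ℝ (deriv p) := hp'.differentiable (by simp)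
  have hcp : Continuous p := hpi.continuous
  have hcp' : Continuous (deriv p) := hp'.continuous
  have hcp'' : Continuous (deriv (deriv p)) := (contDiff_infty_iff_deriv.mp hp').2.continuous
  have hit2 : iteratedDeriv 2 p = deriv (deriv p) := by
    rw [iteratedDeriv_succ, iteratedDeriv_one]
  -- derivative symmetries
  have hd_odd : ∀ θ : ℝ, deriv p (-θ) = - deriv p θ := by
    intro θ
    have hpe : (fun x : ℝ => p (-x)) = p := funext hsym
    have h := deriv_comp_neg (f := p) (x := θ)
    rw [hpe] at h
    linarith
  have hd_per : ∀ c : ℝ, (∀ θ : ℝ, p (θ + c) = p θ) → ∀ θ : ℝ, deriv p (θ + c) = deriv p θ := by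
    intro c hc θ
    have hpe : (fun x : ℝ => p (x + c)) = p := funext hc
    have h := deriv_comp_add_const (f := p) (a := c) (x := θ)
    rw [hpe] at h
    exact h.symm
  set W := ∫ θ in (0:ℝ)..(2*π), p θ with hW_def
  set A := ∫ θ in (0:ℝ)..(2*π), (p θ)^2 with hA_def
  set B := ∫ θ in (0:ℝ)..(2*π), (deriv p θ)^2 with hB_def
  -- integration by parts
  have parts : ∫ θ in (0:ℝ)..(2*π), p θ * iteratedDeriv 2 p θ = -B := by
    rw [hit2]
    have h := intervalIntegral.integral_mul_deriv_eq_deriv_mul_of_hasDerivAt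
      (a := (0:ℝ)) (b := 2*π) (u := p) (v := deriv p) (u' := deriv p) (v' := deriv (deriv p))
      hcp.continuousOn hcp'.continuousOn
      (fun x _ => (hdp x).hasDerivAt) (fun x _ => (hdp' x).hasDerivAt)
      (hcp'.intervalIntegrable _ _) (hcp''.intervalIntegrable _ _)
    rw [h]
    have e1 : p (2*π) = p 0 := by simpa using hper 0
    have e2 : deriv p (2*π) = deriv p 0 := by simpa using hd_per _ hper 0
    have e3 : ∫ x in (0:ℝ)..(2*π), deriv p x * deriv p x = B := by
      rw [hB_def]
      exact intervalIntegral.integral_congr fun x _ => (pow_two (deriv p x)).symm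
    rw [e1, e2, e3]
    ring
  have area_eq : ∫ θ in (0:ℝ)..(2*π), p θ * (p θ + iteratedDeriv 2 p θ) = A - B := by
    have hcont2 : Continuous (fun θ => p θ * iteratedDeriv 2 p θ) := by
      rw [hit2]; exact hcp.mul hcp''
    have he : ∀ θ ∈ uIcc (0:ℝ) (2*π), p θ * (p θ + iteratedDeriv 2 p θ)
        = (p θ)^2 + p θ * iteratedDeriv 2 p θ := fun θ _ => by ring
    rw [intervalIntegral.integral_congr he,
      intervalIntegral.integral_add (f := fun x => p x ^ 2) ((hcp.pow 2).intervalIntegrable _ _)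
        (hcont2.intervalIntegrable _ _), parts]
    rw [hA_def]; ring
  -- variance identity
  have varid : ∀ c : ℝ, ∫ θ in (0:ℝ)..(2*π), (p θ - c)^2 = A - 2*c*W + 2*π*c^2 := by
    intro c
    have he : ∀ θ ∈ uIcc (0:ℝ) (2*π), (p θ - c)^2
        = (p θ)^2 - (2*c) * p θ + c^2 := fun θ _ => by ring
    rw [intervalIntegral.integral_congr he,
      intervalIntegral.integral_add (f := fun x => p x ^ 2 - 2 * c * p x) (g := fun _ => c ^ 2) (((hcp.pow 2).sub (continuous_const.mul hcp)).intervalIntegrable _ _)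
        intervalIntegrable_const,
      intervalIntegral.integral_sub (f := fun x => p x ^ 2) (g := fun x => 2 * c * p x) ((hcp.pow 2).intervalIntegrable _ _)
        ((continuous_const.mul hcp).intervalIntegrable _ _),
      intervalIntegral.integral_const_mul, intervalIntegral.integral_const]
    simp only [smul_eq_mul, ← hA_def, ← hW_def]
    ring
  have hW2 : W^2 ≤ 2*π*A := by
    have hnn : 0 ≤ ∫ θ in (0:ℝ)..(2*π), (p θ - W/(2*π))^2 :=
      intervalIntegral.integral_nonneg (by positivity) (fun x _ => sq_nonneg _)
    rw [varid (W/(2*π))] at hnn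
    have he : A - 2*(W/(2*π))*W + 2*π*(W/(2*π))^2 = A - W^2/(2*π) := by
      field_simp; ring
    rw [he] at hnn
    have := (div_le_iff₀ (by positivity : (0:ℝ) < 2*π)).mp (by linarith : W^2/(2*π) ≤ A)
    linarith
  -- reduction to [0, a]
  have h2pi_eq : (2*π) = (n:ℝ) * (2*π/n) := by field_simp
  have ha_eq : (2*π/(n:ℝ))/2 = a := by rw [ha_def]; ring
  have hreduce : ∀ g : ℝ → ℝ, Continuous g → (∀ x, g (-x) = g x) →
      Function.Periodic g (2*π/n) →
      ∫ x in (0:ℝ)..(2*π), g x = 2*n * ∫ x in (0:ℝ)..a, g x := by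
    intro g hg he hper'
    rw [h2pi_eq, ← ha_eq]
    exact aux_reduce g hg _ he hper' n
  set C := ∫ x in (0:ℝ)..a, (deriv p x)^2 with hC_def
  have hC0 : 0 ≤ C := intervalIntegral.integral_nonneg ha.le (fun x _ => sq_nonneg _)
  have hBred : B = 2*n*C := by
    rw [hB_def, hC_def]
    apply hreduce
    · exact hcp'.pow 2
    · intro x; rw [hd_odd x]; ring
    · intro x; dsimp only; rw [hd_per _ hsymn x]
  set c := p (a/2) with hc_def
  have hVred : ∫ x in (0:ℝ)..(2*π), (p x - c)^2 = 2*n * ∫ x in (0:ℝ)..a, (p x - c)^2 := by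
    apply hreduce
    · exact (hcp.sub continuous_const).pow 2
    · intro x; rw [hsym x]
    · intro x; dsimp only; rw [hsymn x]
  -- sub-claim : for 0 ≤ u ≤ v ≤ a, (p v - p u)^2 ≤ (v - u) * C
  have hsegment : ∀ u v : ℝ, 0 ≤ u → u ≤ v → v ≤ a → (p v - p u)^2 ≤ (v - u) * C := by
    intro u v hu huv hva
    have ftc : ∫ x in u..v, deriv p x = p v - p u :=
      intervalIntegral.integral_deriv_eq_sub (fun x _ => hdp x) (hcp'.intervalIntegrable u v)
    have cs := aux_cs (deriv p) hcp' u v huv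
    rw [ftc] at cs
    have hsplit : ∫ x in u..v, (deriv p x)^2 ≤ C := by
      have e : C = (∫ x in (0:ℝ)..u, (deriv p x)^2) + ((∫ x in u..v, (deriv p x)^2)
          + ∫ x in v..a, (deriv p x)^2) := by
        rw [intervalIntegral.integral_add_adjacent_intervals (f := fun x => (deriv p x)^2) ((hcp'.pow 2).intervalIntegrable _ _)
          ((hcp'.pow 2).intervalIntegrable _ _),
          intervalIntegral.integral_add_adjacent_intervals (f := fun x => (deriv p x)^2) ((hcp'.pow 2).intervalIntegrable _ _)
          ((hcp'.pow 2).intervalIntegrable _ _)]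
      have n1 : 0 ≤ ∫ x in (0:ℝ)..u, (deriv p x)^2 :=
        intervalIntegral.integral_nonneg hu (fun x _ => sq_nonneg _)
      have n2 : 0 ≤ ∫ x in v..a, (deriv p x)^2 :=
        intervalIntegral.integral_nonneg hva (fun x _ => sq_nonneg _)
      linarith [e]
    calc (p v - p u)^2 ≤ (v - u) * ∫ x in u..v, (deriv p x)^2 := cs
      _ ≤ (v - u) * C := mul_le_mul_of_nonneg_left hsplit (by linarith)
  have hpointwise : ∀ θ ∈ Icc (0:ℝ) a, (p θ - c)^2 ≤ |θ - a/2| * C := by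
    intro θ hθ
    rcases le_total (a/2) θ with h | h
    · have := hsegment (a/2) θ (by positivity) h hθ.2
      rw [abs_of_nonneg (by linarith)]
      simpa [hc_def] using this
    · have := hsegment θ (a/2) hθ.1 h (by linarith)
      rw [abs_of_nonpos (by linarith)]
      have e : (p θ - c)^2 = (p (a/2) - p θ)^2 := by rw [hc_def]; ring
      rw [e]
      simpa using this
  -- ∫ |θ - a/2| over [0, a] = a^2/4
  have habs : ∫ θ in (0:ℝ)..a, |θ - a/2| = a^2/4 := by
    have hsplit : ∫ θ in (0:ℝ)..a, |θ - a/2|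
        = (∫ θ in (0:ℝ)..(a/2), |θ - a/2|) + ∫ θ in (a/2)..a, |θ - a/2| :=
      (intervalIntegral.integral_add_adjacent_intervals (a := (0:ℝ)) (b := a/2) (c := a)
        (f := fun θ => |θ - a/2|)
        (((continuous_id.sub continuous_const).abs).intervalIntegrable _ _)
        (((continuous_id.sub continuous_const).abs).intervalIntegrable _ _)).symm
    have h1 : ∫ θ in (0:ℝ)..(a/2), |θ - a/2| = ∫ θ in (0:ℝ)..(a/2), (a/2 - θ) := by
      apply intervalIntegral.integral_congr
      intro x hx
      rw [uIcc_of_le (by linarith : (0:ℝ) ≤ a/2)] at hx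
      dsimp only
      rw [abs_of_nonpos (by linarith [hx.2])]
      ring
    have h2 : ∫ θ in (a/2)..a, |θ - a/2| = ∫ θ in (a/2)..a, (θ - a/2) := by
      apply intervalIntegral.integral_congr
      intro x hx
      rw [uIcc_of_le (by linarith : a/2 ≤ a)] at hx
      dsimp only
      rw [abs_of_nonneg (by linarith [hx.1])]
    have c1 : ∫ θ in (0:ℝ)..(a/2), (a/2 - θ) = a^2/8 := by
      rw [intervalIntegral.integral_sub intervalIntegrable_const
        (intervalIntegral.intervalIntegrable_id), intervalIntegral.integral_const,
        integral_id]
      simp only [smul_eq_mul]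
      ring
    have c2 : ∫ θ in (a/2)..a, (θ - a/2) = a^2/8 := by
      rw [intervalIntegral.integral_sub intervalIntegral.intervalIntegrable_id
        intervalIntegrable_const, integral_id, intervalIntegral.integral_const]
      simp only [smul_eq_mul]
      ring
    rw [hsplit, h1, h2, c1, c2]; ring
  have hVa : ∫ x in (0:ℝ)..a, (p x - c)^2 ≤ a^2/4 * C := by
    have hmono : ∫ x in (0:ℝ)..a, (p x - c)^2 ≤ ∫ x in (0:ℝ)..a, |x - a/2| * C := by
      apply intervalIntegral.integral_mono_on ha.le
        (((hcp.sub continuous_const).pow 2).intervalIntegrable _ _)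
        ((((continuous_id.sub continuous_const).abs).mul continuous_const).intervalIntegrable _ _)
      exact hpointwise
    have hconst : ∫ x in (0:ℝ)..a, |x - a/2| * C = a^2/4 * C := by
      rw [intervalIntegral.integral_mul_const, habs]
    rw [hconst] at hmono
    exact hmono
  have hπ4 : π < 4 := by linarith [Real.pi_lt_d2]
  have hV : ∫ x in (0:ℝ)..(2*π), (p x - c)^2 ≤ B := by
    rw [hVred, hBred]
    have ha2 : a^2/4 ≤ 1 := by nlinarith [ha.le, haπ2, hπ4]
    have h1 : a^2/4 * C ≤ C := by nlinarith [hC0, ha2]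
    calc 2*(n:ℝ) * ∫ x in (0:ℝ)..a, (p x - c)^2 ≤ 2*(n:ℝ) * (a^2/4 * C) :=
          mul_le_mul_of_nonneg_left hVa (by positivity)
      _ ≤ 2*(n:ℝ)*C := mul_le_mul_of_nonneg_left h1 (by positivity)
  -- the deficit and its nonnegativity
  have hvarc := varid c
  have hdef_lb : 0 ≤ W^2 - 2*π*A + 2*π*B := by
    have h1 : A - 2*c*W + 2*π*c^2 ≤ B := by
      have h2 := hV
      rw [hvarc] at h2
      exact h2
    nlinarith [sq_nonneg (W - 2*π*c), hπ]
  -- skeleton bound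
  set M := L / n with hM_def
  have hM : 0 ≤ M := div_nonneg hL hN.le
  have hbound : ∀ θ ∈ Icc (0:ℝ) a, |deriv p θ| ≤ M * Real.sin θ := by
    have hsub : Ioo (0:ℝ) a ⊆ {θ | |deriv p θ| ≤ M * Real.sin θ} := by
      intro θ hθ
      have hsin : 0 < Real.sin θ :=
        Real.sin_pos_of_pos_of_lt_pi hθ.1 (lt_of_lt_of_le hθ.2 (by linarith))
      have hs := hskel θ hθ
      rw [abs_div, abs_of_pos hsin, div_le_iff₀ hsin] at hs
      exact hs
    have hclosed : IsClosed {θ | |deriv p θ| ≤ M * Real.sin θ} :=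
      isClosed_le (hcp'.abs) (continuous_const.mul Real.continuous_sin)
    intro θ hθ
    have hcl : Icc (0:ℝ) a = closure (Ioo 0 a) := (closure_Ioo (ne_of_lt ha)).symm
    exact (hclosed.closure_subset_iff.mpr hsub) (hcl ▸ hθ)
  have hCbound : C ≤ M^2 * ((a - Real.sin a * Real.cos a)/2) := by
    have hmono : C ≤ ∫ x in (0:ℝ)..a, (M * Real.sin x)^2 := by
      rw [hC_def]
      apply intervalIntegral.integral_mono_on ha.le
        ((hcp'.pow 2).intervalIntegrable _ _)
        (((continuous_const.mul Real.continuous_sin).pow 2).intervalIntegrable _ _)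
      intro x hx
      have h := hbound x hx
      calc (deriv p x)^2 = |deriv p x|^2 := (sq_abs _).symm
        _ ≤ (M * Real.sin x)^2 := pow_le_pow_left₀ (abs_nonneg _) h 2
    have hcomp : ∫ x in (0:ℝ)..a, (M * Real.sin x)^2
        = M^2 * ((a - Real.sin a * Real.cos a)/2) := by
      have : ∀ x ∈ uIcc (0:ℝ) a, (M * Real.sin x)^2 = M^2 * (Real.sin x)^2 :=
        fun x _ => by ring
      rw [intervalIntegral.integral_congr this, intervalIntegral.integral_const_mul,
        integral_sin_sq, Real.sin_zero]
      ring
    linarith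
  -- final assembly
  have hsin2a : Real.sin (2*π/n) = 2 * Real.sin a * Real.cos a := by
    rw [show (2*π/(n:ℝ)) = 2*a by rw [ha_def]; ring, Real.sin_two_mul]
  refine ⟨?_, ?_, ?_⟩
  · rw [area_eq]
    nlinarith [hdef_lb]
  · rw [area_eq]
    have hstep : W^2 - 4*π*(1/2*(A - B)) ≤ 2*π*B := by nlinarith [hW2, hπ]
    have hBu : 2*π*B ≤ 2*π*(2*n)*(M^2 * ((a - Real.sin a * Real.cos a)/2)) := by
      rw [hBred]
      calc 2*π*(2*(n:ℝ)*C) = 2*π*(2*(n:ℝ))*C := by ring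
        _ ≤ 2*π*(2*(n:ℝ))*(M^2*((a - Real.sin a*Real.cos a)/2)) :=
          mul_le_mul_of_nonneg_left hCbound (by positivity)
    have heq : 2*π*(2*n)*(M^2 * ((a - Real.sin a * Real.cos a)/2))
        = 2 * π ^ 2 / n ^ 2 * L ^ 2 * (1 - Real.sin (2 * π / n) / (2 * π / n)) := by
      rw [hsin2a, hM_def, ha_def]
      have hn0 : (n:ℝ) ≠ 0 := ne_of_gt hN
      field_simp
    linarith [heq ▸ hBu, hstep]
  · set x := 2*π/(n:ℝ) with hx_def
    have hx0 : 0 < x := by positivity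
    have hslb := aux_sin_lb hx0.le
    have hkey : 1 - Real.sin x / x ≤ x^2/6 := by
      have h1 : 1 - x^2/6 ≤ Real.sin x / x := by
        rw [le_div_iff₀ hx0]; nlinarith [hslb]
      linarith
    have hmul : 2 * π ^ 2 / n ^ 2 * L ^ 2 * (1 - Real.sin x / x)
        ≤ 2 * π ^ 2 / n ^ 2 * L ^ 2 * (x^2/6) :=
      mul_le_mul_of_nonneg_left hkey (by positivity)
    have heq : 2 * π ^ 2 / n ^ 2 * L ^ 2 * (x^2/6) = 4 * π ^ 4 / (3 * n ^ 4) * L ^ 2 := by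
      rw [hx_def]
      have hn0 : (n:ℝ) ≠ 0 := ne_of_gt hN
      field_simp
      ring
    linarith

end
end
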